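/- arXiv:0811.4440 — 7 statements merged into one kernel-verified Lean document; each statement's English description precedes it below -/
import Mathlib

section
/- Let H be a complex Hilbert space, let T : H → H be a bounded self-adjoint operator with T ≥ 0, and let P be the orthogonal projection onto the kernel of T. Let l ≥ 1 be an integer, f₀ : ℝ → ℂ a Schwartz function not identically zero on (0,∞), and f(s) = s^l f₀(s). Suppose a > 0, a ≠ 1, and there exist constants 0 < A ≤ B < ∞ with A ≤ Σ_{j∈ℤ} |f(a^{2j}s)|² ≤ B for every s > 0 (the Daubechies condition). Then for every F ∈ H the series Σ_{j∈ℤ} ⟨|f|²(a^{2j}T)F, F⟩ converges (where |f|²(a^{2j}T) denotes the continuous functional calculus of T applied to s ↦ |f(a^{2j}s)|²), and A·‖F − PF‖² ≤ Σ_{j∈ℤ} ⟨|f|²(a^{2j}T)F, F⟩ ≤ B·‖F − PF‖². -/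
/-!
Write `G = F - P F`. Since `l ≥ 1`, each `s ↦ |f(a^{2j}s)|²` is `s` times a continuous function,
so its functional calculus kills `ker T` and the series for `F` is the series for
`G ∈ (ker T)ᗮ`. The partial sums of `∑ⱼ |f(a^{2j}s)|²` are at most `B` on the spectrum, which gives
summability and the upper bound. For the lower bound take `c < A` and a cut-off `ψ_δ` equal to `1`
on `[0, δ]`: on the compact set `σ(T) ∩ [δ, ∞)` a single finite partial sum exceeds `c`, so
`c (1 - ψ_δ) ≤` that partial sum on `σ(T)`. Finally `ψ_δ(T) G → 0` as `δ → 0`, because `G` lies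
in the closure of the range of `T` and `|s ψ_δ(s)| ≤ 2δ`.
-/

open Filter Topology

lemma IsCompact.exists_finset_forall_lt_sum {X ι : Type*} [TopologicalSpace X] {K : Set X}
    (hK : IsCompact K) {g : ι → X → ℝ} (hgc : ∀ j, Continuous (g j)) (hg0 : ∀ j x, 0 ≤ g j x)
    {c : ℝ} (hlt : ∀ x ∈ K, ∃ t : Finset ι, c < ∑ j ∈ t, g j x) :
    ∃ t : Finset ι, ∀ x ∈ K, c < ∑ j ∈ t, g j x := by
  classical
  have hmono : Monotone fun t : Finset ι => {x | c < ∑ j ∈ t, g j x} := fun t t' htt' x hx =>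
    hx.trans_le (Finset.sum_le_sum_of_subset_of_nonneg htt' fun j _ _ => hg0 j x)
  exact hK.elim_directed_cover _
    (fun t => isOpen_lt continuous_const (continuous_finsetSum t fun j _ => hgc j))
    (fun x hx => Set.mem_iUnion.mpr (hlt x hx)) hmono.directed_le

noncomputable def cutoff (δ s : ℝ) : ℝ := min 1 (max 0 (2 - s / δ))

namespace cutoff

@[fun_prop]
lemma continuous (δ : ℝ) : Continuous (cutoff δ) := by
  unfold cutoff; fun_prop

lemma nonneg (δ s : ℝ) : 0 ≤ cutoff δ s := le_min zero_le_one (le_max_left _ _)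

lemma le_one (δ s : ℝ) : cutoff δ s ≤ 1 := min_le_left _ _

lemma eq_one_of_le {δ : ℝ} (hδ : 0 < δ) {s : ℝ} (hs : s ≤ δ) : cutoff δ s = 1 := by
  have : 1 ≤ 2 - s / δ := by rw [le_sub_comm, div_le_iff₀ hδ]; linarith
  simp [cutoff, le_max_of_le_right this]

lemma abs_mul_le {δ : ℝ} (hδ : 0 < δ) {s : ℝ} (hs : 0 ≤ s) : |cutoff δ s * s| ≤ 2 * δ := by
  rw [abs_of_nonneg (mul_nonneg (nonneg δ s) hs)]
  rcases le_or_gt s (2 * δ) with h | h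
  · nlinarith [le_one δ s]
  · have : 2 - s / δ ≤ 0 := by rw [sub_nonpos, le_div_iff₀ hδ]; linarith
    simp [cutoff, max_eq_left this, hδ.le]

end cutoff

lemma norm_sq_pow_mul_apply_mul_eq {l : ℕ} (hl : 1 ≤ l) {φ f : ℝ → ℂ}
    (hf : ∀ u, f u = (u : ℂ) ^ l * φ u) (c s : ℝ) :
    ‖f (c * s)‖ ^ 2 = c ^ (2 * l) * s ^ (2 * l - 1) * ‖φ (c * s)‖ ^ 2 * s := by
  obtain ⟨k, rfl⟩ := Nat.exists_eq_add_of_le' hl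
  rw [hf, norm_mul, norm_pow, Complex.norm_real, Real.norm_eq_abs, mul_pow, ← pow_mul, pow_mul',
    sq_abs, show 2 * (k + 1) - 1 = 2 * k + 1 by omega]
  ring

section InnerProduct

variable {H : Type*} [NormedAddCommGroup H] [InnerProductSpace ℂ H]

namespace ContinuousLinearMap

lemma re_inner_apply_self_mono {X Y : H →L[ℂ] H} (h : X ≤ Y) (x : H) :
    (inner ℂ (X x) x).re ≤ (inner ℂ (Y x) x).re := by
  have := ((le_def X Y).mp h).re_inner_nonneg_left x
  simpa [inner_sub_left] using this

lemma re_inner_apply_self_nonneg {X : H →L[ℂ] H} (h : 0 ≤ X) (x : H) :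
    0 ≤ (inner ℂ (X x) x).re :=
  ((nonneg_iff_isPositive X).mp h).re_inner_nonneg_left x

lemma re_inner_algebraMap_apply_self (r : ℝ) (x : H) :
    (inner ℂ (algebraMap ℝ (H →L[ℂ] H) r x) x).re = r * ‖x‖ ^ 2 := by
  simp [Algebra.algebraMap_eq_smul_one, ← Complex.ofReal_pow]

end ContinuousLinearMap

end InnerProduct

section Hilbert

variable {H : Type*} [NormedAddCommGroup H] [InnerProductSpace ℂ H] [CompleteSpace H]

lemma IsSelfAdjoint.inner_apply_add_self_of_apply_eq_zero {X : H →L[ℂ] H} (hX : IsSelfAdjoint X)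
    (x : H) {y : H} (hy : X y = 0) : inner ℂ (X (x + y)) (x + y) = inner ℂ (X x) x := by
  rw [map_add, hy, add_zero, inner_add_right, ← ContinuousLinearMap.adjoint_inner_right X x y,
    hX.adjoint_eq, hy, inner_zero_right, add_zero]

lemma cfc_mul_id_apply_eq_zero {T : H →L[ℂ] H} (hT : IsSelfAdjoint T) {r : ℝ → ℝ}
    (hr : Continuous r) {x : H} (hx : T x = 0) : cfc (fun s => r s * s) T x = 0 := by
  rw [cfc_mul r (fun s => s) T, cfc_id' ℝ T, mul_apply_eq_comp, hx, map_zero]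

lemma cfc_norm_sq_pow_mul_apply_mul_eq_zero {l : ℕ} (hl : 1 ≤ l) {φ f : ℝ → ℂ}
    (hφ : Continuous φ) (hf : ∀ u, f u = (u : ℂ) ^ l * φ u) (c : ℝ) {T : H →L[ℂ] H}
    (hT : IsSelfAdjoint T) {x : H} (hx : T x = 0) : cfc (fun s => ‖f (c * s)‖ ^ 2) T x = 0 := by
  rw [funext (norm_sq_pow_mul_apply_mul_eq hl hf c)]
  exact cfc_mul_id_apply_eq_zero hT (by fun_prop) hx

lemma re_inner_cfc_apply_self_nonneg {T : H →L[ℂ] H} {g : ℝ → ℝ}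
    (hg : ∀ s ∈ spectrum ℝ T, 0 ≤ g s) (x : H) : 0 ≤ (inner ℂ (cfc g T x) x).re :=
  ContinuousLinearMap.re_inner_apply_self_nonneg (cfc_nonneg hg) x

lemma sum_re_inner_cfc_apply_self {ι : Type*} (g : ι → ℝ → ℝ) (hg : ∀ j, Continuous (g j))
    (T : H →L[ℂ] H) (t : Finset ι) (x : H) :
    ∑ j ∈ t, (inner ℂ (cfc (g j) T x) x).re =
      (inner ℂ (cfc (fun s => ∑ j ∈ t, g j s) T x) x).re := by
  rw [← Finset.sum_fn, cfc_sum g T t, sum_apply, sum_inner, Complex.re_sum]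

lemma norm_cfc_cutoff_apply_le {T : H →L[ℂ] H} (hT : 0 ≤ T) {δ : ℝ} (hδ : 0 < δ) (x y : H) :
    ‖cfc (cutoff δ) T x‖ ≤ ‖x - T y‖ + 2 * δ * ‖y‖ := by
  have hspec := spectrum_nonneg_of_nonneg (𝕜 := ℝ) hT
  have hψ : ‖cfc (cutoff δ) T‖ ≤ 1 := norm_cfc_le zero_le_one fun s _ => by
    rw [Real.norm_of_nonneg (cutoff.nonneg δ s)]; exact cutoff.le_one δ s
  have hψT : ‖cfc (cutoff δ) T * T‖ ≤ 2 * δ := by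
    have hmul := cfc_mul (cutoff δ) (fun s => s) T
    rw [cfc_id' ℝ T] at hmul
    rw [← hmul]
    exact norm_cfc_le (by positivity) fun s hs => cutoff.abs_mul_le hδ (hspec hs)
  calc ‖cfc (cutoff δ) T x‖ = ‖cfc (cutoff δ) T (x - T y) + (cfc (cutoff δ) T * T) y‖ := by
        rw [map_sub, mul_apply_eq_comp, sub_add_cancel]
    _ ≤ 1 * ‖x - T y‖ + 2 * δ * ‖y‖ :=
        norm_add_le_of_le ((ContinuousLinearMap.le_opNorm _ _).trans (by gcongr))
          ((ContinuousLinearMap.le_opNorm _ _).trans (by gcongr))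
    _ = ‖x - T y‖ + 2 * δ * ‖y‖ := by rw [one_mul]

lemma tendsto_norm_cfc_cutoff_apply {T : H →L[ℂ] H} (hT : 0 ≤ T) {x : H}
    (hx : x ∈ (LinearMap.ker (T : H →ₗ[ℂ] H))ᗮ) :
    Tendsto (fun δ => ‖cfc (cutoff δ) T x‖) (𝓝[>] 0) (𝓝 0) := by
  have hx' : x ∈ closure (Set.range T) := by
    rw [ContinuousLinearMap.orthogonal_ker, hT.isSelfAdjoint.adjoint_eq] at hx
    exact hx
  rw [Metric.tendsto_nhds]
  intro ε hε
  obtain ⟨_, ⟨y, rfl⟩, hy⟩ := Metric.mem_closure_iff.mp hx' (ε / 2) (by positivity)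
  have hsmall : ∀ᶠ δ in 𝓝[>] (0 : ℝ), 2 * δ * ‖y‖ < ε / 2 :=
    nhdsWithin_le_nhds <| (Continuous.tendsto' (by fun_prop) 0 0 (by simp)).eventually
      (gt_mem_nhds (half_pos hε))
  filter_upwards [hsmall, self_mem_nhdsWithin] with δ hδ hδ0
  rw [Real.dist_0_eq_abs, abs_norm]
  calc _ ≤ ‖x - T y‖ + 2 * δ * ‖y‖ := norm_cfc_cutoff_apply_le hT hδ0 x y
    _ < ε := by rw [← dist_eq_norm]; linarith

section FrameBounds

variable {ι : Type*} {T : H →L[ℂ] H} {g : ι → ℝ → ℝ}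

theorem summable_re_inner_cfc_apply_self_and_tsum_le (hT : IsSelfAdjoint T)
    (hgc : ∀ j, Continuous (g j)) (hg0 : ∀ j s, 0 ≤ g j s) {B : ℝ}
    (hB : ∀ t : Finset ι, ∀ s ∈ spectrum ℝ T, ∑ j ∈ t, g j s ≤ B) (x : H) :
    Summable (fun j => (inner ℂ (cfc (g j) T x) x).re) ∧
      ∑' j, (inner ℂ (cfc (g j) T x) x).re ≤ B * ‖x‖ ^ 2 := by
  have hnonneg j := re_inner_cfc_apply_self_nonneg (T := T) (fun s _ => hg0 j s) x
  have hpartial (t : Finset ι) : ∑ j ∈ t, (inner ℂ (cfc (g j) T x) x).re ≤ B * ‖x‖ ^ 2 := by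
    rw [sum_re_inner_cfc_apply_self g hgc, ← ContinuousLinearMap.re_inner_algebraMap_apply_self]
    exact ContinuousLinearMap.re_inner_apply_self_mono
      (cfc_le_algebraMap _ B T (hB t) (continuous_finsetSum t fun j _ => hgc j).continuousOn) x
  have hsum := summable_of_sum_le hnonneg hpartial
  exact ⟨hsum, hsum.tsum_le_of_sum_le hpartial⟩

lemma mul_sub_le_tsum_re_inner_cfc_apply_self (hT : IsSelfAdjoint T) (hgc : ∀ j, Continuous (g j))
    (hg0 : ∀ j s, 0 ≤ g j s) {A c δ : ℝ} (hc : 0 < c) (hcA : c < A) (hδ : 0 < δ)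
    (hA : ∀ s ∈ spectrum ℝ T, 0 < s → Summable (g · s) ∧ A ≤ ∑' j, g j s) (x : H)
    (hsum : Summable fun j => (inner ℂ (cfc (g j) T x) x).re) :
    c * (‖x‖ ^ 2 - ‖cfc (cutoff δ) T x‖ * ‖x‖) ≤ ∑' j, (inner ℂ (cfc (g j) T x) x).re := by
  obtain ⟨t, ht⟩ : ∃ t : Finset ι, ∀ s ∈ spectrum ℝ T ∩ Set.Ici δ, c < ∑ j ∈ t, g j s := by
    refine ((ContinuousFunctionalCalculus.isCompact_spectrum T).inter_right isClosed_Ici)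
      |>.exists_finset_forall_lt_sum hgc hg0 fun s ⟨hs, hδs⟩ => ?_
    obtain ⟨hsumm, hAs⟩ := hA s hs (hδ.trans_le hδs)
    exact (hsumm.hasSum.eventually (lt_mem_nhds (hcA.trans_le hAs))).exists
  have hop : cfc (fun s => c - c * cutoff δ s) T ≤ cfc (fun s => ∑ j ∈ t, g j s) T := by
    refine cfc_mono (fun s hs => ?_) (by fun_prop)
      (continuous_finsetSum t fun j _ => hgc j).continuousOn
    rcases le_or_gt s δ with hsδ | hδs
    · rw [cutoff.eq_one_of_le hδ hsδ, mul_one, sub_self]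
      exact Finset.sum_nonneg fun j _ => hg0 j s
    · nlinarith [ht s ⟨hs, hδs.le⟩, cutoff.nonneg δ s]
  have hlhs : (inner ℂ (cfc (fun s => c - c * cutoff δ s) T x) x).re =
      c * (‖x‖ ^ 2 - (inner ℂ (cfc (cutoff δ) T x) x).re) := by
    rw [cfc_sub (fun _ => c) (fun s => c * cutoff δ s) T, cfc_const c T,
      cfc_const_mul c (cutoff δ) T, sub_apply, smul_apply, inner_sub_left, Complex.sub_re,
      ContinuousLinearMap.re_inner_algebraMap_apply_self, RCLike.real_smul_eq_coe_smul (K := ℂ),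
      inner_smul_real_left, Complex.smul_re, smul_eq_mul, mul_sub]
  calc c * (‖x‖ ^ 2 - ‖cfc (cutoff δ) T x‖ * ‖x‖)
      ≤ c * (‖x‖ ^ 2 - (inner ℂ (cfc (cutoff δ) T x) x).re) := by
        gcongr
        exact (Complex.re_le_norm _).trans (norm_inner_le_norm _ _)
    _ ≤ ∑ j ∈ t, (inner ℂ (cfc (g j) T x) x).re := by
        rw [sum_re_inner_cfc_apply_self g hgc, ← hlhs]
        exact ContinuousLinearMap.re_inner_apply_self_mono hop x
    _ ≤ ∑' j, (inner ℂ (cfc (g j) T x) x).re :=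
        hsum.sum_le_tsum t fun j _ => re_inner_cfc_apply_self_nonneg (fun s _ => hg0 j s) x

theorem mul_norm_sq_le_tsum_re_inner_cfc_apply_self (hT : 0 ≤ T) (hgc : ∀ j, Continuous (g j))
    (hg0 : ∀ j s, 0 ≤ g j s) {A : ℝ} (hA0 : 0 < A)
    (hA : ∀ s ∈ spectrum ℝ T, 0 < s → Summable (g · s) ∧ A ≤ ∑' j, g j s) {x : H}
    (hx : x ∈ (LinearMap.ker (T : H →ₗ[ℂ] H))ᗮ)
    (hsum : Summable fun j => (inner ℂ (cfc (g j) T x) x).re) :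
    A * ‖x‖ ^ 2 ≤ ∑' j, (inner ℂ (cfc (g j) T x) x).re := by
  have hc (c : ℝ) (hc : c ∈ Set.Ioo 0 A) : c * ‖x‖ ^ 2 ≤ ∑' j, (inner ℂ (cfc (g j) T x) x).re := by
    have hlim : Tendsto (fun δ => c * (‖x‖ ^ 2 - ‖cfc (cutoff δ) T x‖ * ‖x‖)) (𝓝[>] 0)
        (𝓝 (c * (‖x‖ ^ 2 - 0 * ‖x‖))) :=
      (((tendsto_norm_cfc_cutoff_apply hT hx).mul_const _).const_sub _).const_mul c
    rw [zero_mul, sub_zero] at hlim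
    exact le_of_tendsto hlim (eventually_mem_nhdsWithin.mono fun δ hδ =>
      mul_sub_le_tsum_re_inner_cfc_apply_self hT.isSelfAdjoint hgc hg0 hc.1 hc.2 hδ hA x hsum)
  have hlim : Tendsto (fun c => c * ‖x‖ ^ 2) (𝓝[<] A) (𝓝 (A * ‖x‖ ^ 2)) :=
    tendsto_nhdsWithin_of_tendsto_nhds ((continuous_mul_const _).tendsto A)
  exact le_of_tendsto hlim (eventually_of_mem (Ioo_mem_nhdsLT hA0) hc)

end FrameBounds

end Hilbert

theorem stmt3_general {H : Type*} [NormedAddCommGroup H] [InnerProductSpace ℂ H] [CompleteSpace H]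
    (T : H →L[ℂ] H) (hT : T.IsPositive)
    (P : H →L[ℂ] H)
    (hP : ∀ x : H, P x ∈ LinearMap.ker (T : H →ₗ[ℂ] H) ∧
      x - P x ∈ (LinearMap.ker (T : H →ₗ[ℂ] H) : Submodule ℂ H)ᗮ)
    (l : ℕ) (hl : 1 ≤ l)
    (f₀ : SchwartzMap ℝ ℂ)
    (f : ℝ → ℂ) (hf : ∀ s : ℝ, f s = (s : ℂ) ^ l * f₀ s)
    (a : ℝ)
    (A B : ℝ) (hA : 0 < A) (hAB : A ≤ B)
    (hDaub : ∀ s : ℝ, 0 < s →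
      Summable (fun j : ℤ => ‖f (a ^ (2 * j) * s)‖ ^ 2) ∧
      A ≤ ∑' j : ℤ, ‖f (a ^ (2 * j) * s)‖ ^ 2 ∧
      (∑' j : ℤ, ‖f (a ^ (2 * j) * s)‖ ^ 2) ≤ B)
    (F : H) :
    Summable (fun j : ℤ =>
      (inner ℂ ((cfc (fun s : ℝ => ‖f (a ^ (2 * j) * s)‖ ^ 2) T) F) F : ℂ).re) ∧
    A * ‖F - P F‖ ^ 2 ≤
      (∑' j : ℤ, (inner ℂ ((cfc (fun s : ℝ => ‖f (a ^ (2 * j) * s)‖ ^ 2) T) F) F : ℂ).re) ∧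
    (∑' j : ℤ, (inner ℂ ((cfc (fun s : ℝ => ‖f (a ^ (2 * j) * s)‖ ^ 2) T) F) F : ℂ).re) ≤
      B * ‖F - P F‖ ^ 2 := by
  have hT0 : 0 ≤ T := (ContinuousLinearMap.nonneg_iff_isPositive T).mpr hT
  have hfc : Continuous f := by rw [funext hf]; fun_prop
  have hgc (j : ℤ) : Continuous fun s => ‖f (a ^ (2 * j) * s)‖ ^ 2 := by fun_prop
  have hg0 (j : ℤ) (s : ℝ) : 0 ≤ ‖f (a ^ (2 * j) * s)‖ ^ 2 := by positivity
  have hker (j : ℤ) : inner ℂ (cfc (fun s => ‖f (a ^ (2 * j) * s)‖ ^ 2) T F) F =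
      inner ℂ (cfc (fun s => ‖f (a ^ (2 * j) * s)‖ ^ 2) T (F - P F)) (F - P F) := by
    simpa using IsSelfAdjoint.inner_apply_add_self_of_apply_eq_zero (cfc_predicate _ T) (F - P F)
      (cfc_norm_sq_pow_mul_apply_mul_eq_zero hl f₀.continuous hf _ hT.isSelfAdjoint (hP F).1)
  have hB (t : Finset ℤ) (s : ℝ) (hs : s ∈ spectrum ℝ T) :
      ∑ j ∈ t, ‖f (a ^ (2 * j) * s)‖ ^ 2 ≤ B := by
    rcases (spectrum_nonneg_of_nonneg hT0 hs).eq_or_lt with rfl | hs0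
    · rw [Finset.sum_eq_zero fun j _ => by rw [norm_sq_pow_mul_apply_mul_eq hl hf, mul_zero]]
      exact hA.le.trans hAB
    · obtain ⟨hsum, -, hle⟩ := hDaub s hs0
      exact (hsum.sum_le_tsum t fun j _ => hg0 j s).trans hle
  simp_rw [hker]
  obtain ⟨hsum, hupper⟩ :=
    summable_re_inner_cfc_apply_self_and_tsum_le hT.isSelfAdjoint hgc hg0 hB (F - P F)
  exact ⟨hsum, mul_norm_sq_le_tsum_re_inner_cfc_apply_self hT0 hgc hg0 hA
    (fun s _ hs => (hDaub s hs).imp_right And.left) (hP F).2 hsum, hupper⟩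

/-- Discrete spectral theorem application: with `T` bounded positive self-adjoint on a
complex Hilbert space, `P` the orthogonal projection onto `ker T`, `f s = s^l f₀ s`,
and `a > 0`, `a ≠ 1` satisfying the Daubechies condition
`0 < A ≤ Σ_{j∈ℤ} |f(a^{2j}s)|² ≤ B < ∞` for all `s > 0`, the series
`Σ_{j∈ℤ} ⟨|f|²(a^{2j}T)F, F⟩` converges and lies between `A‖F-PF‖²` and `B‖F-PF‖²`. -/
theorem stmt3 {H : Type*} [NormedAddCommGroup H] [InnerProductSpace ℂ H] [CompleteSpace H]
    (T : H →L[ℂ] H) (hT : T.IsPositive)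
    (P : H →L[ℂ] H)
    (hP : ∀ x : H, P x ∈ LinearMap.ker (T : H →ₗ[ℂ] H) ∧
      x - P x ∈ (LinearMap.ker (T : H →ₗ[ℂ] H) : Submodule ℂ H)ᗮ)
    (l : ℕ) (hl : 1 ≤ l)
    (f₀ : SchwartzMap ℝ ℂ) (hf₀ : ∃ s : ℝ, 0 < s ∧ f₀ s ≠ 0)
    (f : ℝ → ℂ) (hf : ∀ s : ℝ, f s = (s : ℂ) ^ l * f₀ s)
    (a : ℝ) (ha : 0 < a) (ha1 : a ≠ 1)
    (A B : ℝ) (hA : 0 < A) (hAB : A ≤ B)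
    (hDaub : ∀ s : ℝ, 0 < s →
      Summable (fun j : ℤ => ‖f (a ^ (2 * j) * s)‖ ^ 2) ∧
      A ≤ ∑' j : ℤ, ‖f (a ^ (2 * j) * s)‖ ^ 2 ∧
      (∑' j : ℤ, ‖f (a ^ (2 * j) * s)‖ ^ 2) ≤ B)
    (F : H) :
    Summable (fun j : ℤ =>
      (inner ℂ ((cfc (fun s : ℝ => ‖f (a ^ (2 * j) * s)‖ ^ 2) T) F) F : ℂ).re) ∧
    A * ‖F - P F‖ ^ 2 ≤
      (∑' j : ℤ, (inner ℂ ((cfc (fun s : ℝ => ‖f (a ^ (2 * j) * s)‖ ^ 2) T) F) F : ℂ).re) ∧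
    (∑' j : ℤ, (inner ℂ ((cfc (fun s : ℝ => ‖f (a ^ (2 * j) * s)‖ ^ 2) T) F) F : ℂ).re) ≤
      B * ‖F - P F‖ ^ 2 :=
  stmt3_general T hT P hP l hl f₀ f hf a A B hA hAB hDaub F
end

section
/- Let l ≥ 1 and J ≥ 1 be integers, f₀ : ℝ → ℂ a Schwartz function not identically zero on (0,∞), f(s) = s^l f₀(s), and M_J = sup_{r>0} |r^J f(r)|. Fix a > 1 and 0 < η < L < ∞. For integers M, N ≥ 0 define h_{M,N}(λ) = Σ_{j=-M}^{N} |f(a^{2j}λ)|² and h(λ) = Σ_{j∈ℤ} |f(a^{2j}λ)|² (the latter series converging for λ ∈ [η,L]). Then for every λ ∈ [η, L], |h_{M,N}(λ) − h(λ)| ≤ c'_L / a^{4Ml} + C'_η / a^{4NJ}, where c'_L = L^{2l}·(sup_{s≥0}|f₀(s)|)² / (a^{4l} − 1) and C'_η = M_J² / ((a^{4J} − 1) η^{2J}). -/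
/-!
On `[0, ∞)` the function `f` satisfies `|f s| ≤ ‖f₀‖_∞ s^l` (small `s`) and `|f s| ≤ M_J s^{-J}`
(large `s`). Along the geometric sequence `a^{2j} λ` with `λ ∈ [η, L]`, the terms `|f(a^{2j}λ)|²`
are therefore dominated by geometric sequences of ratio `a^{-4l}` as `j → -∞` and `a^{-4J}` as
`j → +∞`, and the two tails left out of the truncated sum are bounded by the corresponding
geometric tails.
-/

open Finset
open scoped SchwartzMap

theorem summable_of_le_geometric {u : ℕ → ℝ} {C q : ℝ} (hu : ∀ n, 0 ≤ u n)
    (hq₀ : 0 ≤ q) (hq₁ : q < 1) (hle : ∀ n, u n ≤ C * q ^ n) : Summable u :=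
  .of_nonneg_of_le hu hle ((summable_geometric_of_lt_one hq₀ hq₁).mul_left C)

theorem tsum_nat_add_le_of_le_geometric {u : ℕ → ℝ} {C q : ℝ} (hu : ∀ n, 0 ≤ u n)
    (hq₀ : 0 ≤ q) (hq₁ : q < 1) (hle : ∀ n, u n ≤ C * q ^ n) (n : ℕ) :
    ∑' k, u (k + n) ≤ C * q ^ n / (1 - q) := by
  have hgeom : Summable fun k => C * q ^ n * q ^ k :=
    (summable_geometric_of_lt_one hq₀ hq₁).mul_left _
  have hle' : ∀ k, u (k + n) ≤ C * q ^ n * q ^ k := fun k => (hle _).trans_eq (by ring)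
  calc ∑' k, u (k + n) ≤ ∑' k, C * q ^ n * q ^ k :=
        (hgeom.of_nonneg_of_le (fun k => hu _) hle').tsum_le_tsum hle' hgeom
    _ = C * q ^ n / (1 - q) := by
        rw [tsum_mul_left, tsum_geometric_of_lt_one hq₀ hq₁, div_eq_mul_inv]

theorem Finset.sum_Icc_neg_natCast {β : Type*} [AddCommMonoid β] (g : ℤ → β) (M N : ℕ) :
    ∑ j ∈ Icc (-(M : ℤ)) N, g j = ∑ n ∈ range (N + 1), g n + ∑ n ∈ range M, g (-(n + 1)) := by
  induction M with
  | zero =>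
    rw [range_zero, sum_empty, add_zero, Nat.cast_zero, neg_zero]
    induction N with
    | zero => simp
    | succ N ih =>
      rw [Nat.cast_succ, ← insert_Icc_right_eq_Icc_add_one (by omega), sum_insert (by simp),
        ih, sum_range_succ _ (N + 1), add_comm, Nat.cast_succ]
  | succ M ih =>
    rw [← insert_Icc_add_one_left_eq_Icc (by omega), sum_insert (by simp), sum_range_succ _ M,
      Nat.cast_succ, show -((M : ℤ) + 1) + 1 = -M by ring, ih]
    abel

theorem le_geometric_of_neg_add_one {g : ℤ → ℝ} {C q : ℝ}
    (hneg : ∀ n : ℕ, g (-n) ≤ C * q ^ n) (n : ℕ) : g (-(n + 1)) ≤ C * q * q ^ n := by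
  simpa [pow_succ', mul_assoc] using hneg (n + 1)

theorem summable_int_of_le_geometric {g : ℤ → ℝ} {C D q r : ℝ} (hg : ∀ j, 0 ≤ g j)
    (hq₀ : 0 ≤ q) (hq₁ : q < 1) (hr₀ : 0 ≤ r) (hr₁ : r < 1)
    (hneg : ∀ n : ℕ, g (-n) ≤ C * q ^ n) (hpos : ∀ n : ℕ, g n ≤ D * r ^ n) : Summable g :=
  .of_nat_of_neg_add_one (summable_of_le_geometric (fun _ => hg _) hr₀ hr₁ hpos)
    (summable_of_le_geometric (fun _ => hg _) hq₀ hq₁ (le_geometric_of_neg_add_one hneg))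

theorem abs_sum_Icc_sub_tsum_le_of_le_geometric {g : ℤ → ℝ} {C D q r : ℝ} (hg : ∀ j, 0 ≤ g j)
    (hq₀ : 0 ≤ q) (hq₁ : q < 1) (hr₀ : 0 ≤ r) (hr₁ : r < 1)
    (hneg : ∀ n : ℕ, g (-n) ≤ C * q ^ n) (hpos : ∀ n : ℕ, g n ≤ D * r ^ n) (M N : ℕ) :
    |∑ j ∈ Icc (-(M : ℤ)) N, g j - ∑' j, g j| ≤
      C * q ^ (M + 1) / (1 - q) + D * r ^ (N + 1) / (1 - r) := by
  have hv := le_geometric_of_neg_add_one hneg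
  have hsu := summable_of_le_geometric (fun _ => hg _) hr₀ hr₁ hpos
  have hsv := summable_of_le_geometric (fun _ => hg _) hq₀ hq₁ hv
  rw [sum_Icc_neg_natCast, tsum_of_nat_of_neg_add_one hsu hsv,
    ← hsu.sum_add_tsum_nat_add (N + 1), ← hsv.sum_add_tsum_nat_add M,
    abs_sub_comm, add_add_add_comm, add_sub_cancel_left,
    abs_of_nonneg (add_nonneg (tsum_nonneg fun _ => hg _) (tsum_nonneg fun _ => hg _)), add_comm,
    pow_succ', ← mul_assoc]
  exact add_le_add (tsum_nat_add_le_of_le_geometric (fun _ => hg _) hq₀ hq₁ hv M)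
    (tsum_nat_add_le_of_le_geometric (fun _ => hg _) hr₀ hr₁ hpos (N + 1))

theorem sq_norm_le_of_norm_le_mul_pow {E : Type*} [SeminormedAddCommGroup E] {φ : ℝ → E}
    {S : ℝ} {l : ℕ} (hφ : ∀ x, 0 ≤ x → ‖φ x‖ ≤ S * x ^ l) {a lam L : ℝ} (ha : 0 < a)
    (hlam : 0 ≤ lam) (hL : lam ≤ L) (n : ℕ) :
    ‖φ (a ^ (2 * -(n : ℤ)) * lam)‖ ^ 2 ≤ L ^ (2 * l) * S ^ 2 * (a ^ (4 * l))⁻¹ ^ n := by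
  have hx : a ^ (2 * -(n : ℤ)) * lam = lam / (a ^ 2) ^ n := by
    rw [zpow_mul, zpow_neg, zpow_natCast, zpow_ofNat, div_eq_inv_mul]
  have hx₀ : 0 ≤ lam / (a ^ 2) ^ n := by positivity
  rw [hx]
  calc ‖φ (lam / (a ^ 2) ^ n)‖ ^ 2 ≤ (S * (lam / (a ^ 2) ^ n) ^ l) ^ 2 :=
        pow_le_pow_left₀ (norm_nonneg _) (hφ _ hx₀) 2
    _ = lam ^ (2 * l) * S ^ 2 * (a ^ (4 * l))⁻¹ ^ n := by
        field_simp
        ring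
    _ ≤ L ^ (2 * l) * S ^ 2 * (a ^ (4 * l))⁻¹ ^ n := by gcongr

theorem sq_norm_le_of_pow_mul_norm_le {E : Type*} [SeminormedAddCommGroup E] {φ : ℝ → E}
    {K : ℝ} {J : ℕ} (hφ : ∀ x, 0 < x → x ^ J * ‖φ x‖ ≤ K) {a η lam : ℝ} (ha : 0 < a)
    (hη : 0 < η) (hlam : η ≤ lam) (n : ℕ) :
    ‖φ (a ^ (2 * (n : ℤ)) * lam)‖ ^ 2 ≤ K ^ 2 / η ^ (2 * J) * (a ^ (4 * J))⁻¹ ^ n := by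
  have hx : a ^ (2 * (n : ℤ)) * lam = (a ^ 2) ^ n * lam := by
    rw [zpow_mul, zpow_natCast, zpow_ofNat]
  have hlam₀ : 0 < lam := hη.trans_le hlam
  have hx₀ : 0 < (a ^ 2) ^ n * lam := by positivity
  rw [hx]
  have hφx : ‖φ ((a ^ 2) ^ n * lam)‖ ≤ K / ((a ^ 2) ^ n * lam) ^ J := by
    rw [le_div_iff₀ (by positivity), mul_comm]
    exact hφ _ hx₀
  calc ‖φ ((a ^ 2) ^ n * lam)‖ ^ 2 ≤ (K / ((a ^ 2) ^ n * lam) ^ J) ^ 2 :=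
        pow_le_pow_left₀ (norm_nonneg _) hφx 2
    _ = K ^ 2 / ((a ^ (4 * J)) ^ n * lam ^ (2 * J)) := by ring
    _ ≤ K ^ 2 / ((a ^ (4 * J)) ^ n * η ^ (2 * J)) := by gcongr
    _ = K ^ 2 / η ^ (2 * J) * (a ^ (4 * J))⁻¹ ^ n := by ring

theorem SchwartzMap.norm_le_iSup_Ici {F : Type*} [NormedAddCommGroup F] [NormedSpace ℝ F]
    (f : 𝓢(ℝ, F)) {x : ℝ} (hx : 0 ≤ x) : ‖f x‖ ≤ ⨆ s : Set.Ici (0 : ℝ), ‖f s‖ :=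
  le_ciSup (f := fun s : Set.Ici (0 : ℝ) => ‖f s‖)
    ⟨SchwartzMap.seminorm ℝ 0 0 f, by rintro _ ⟨s, rfl⟩; exact norm_le_seminorm ℝ f s⟩ ⟨x, hx⟩

theorem SchwartzMap.pow_mul_norm_ofReal_pow_mul_le_iSup (f : 𝓢(ℝ, ℂ)) (l J : ℕ) {x : ℝ}
    (hx : 0 < x) :
    x ^ J * ‖(x : ℂ) ^ l * f x‖ ≤
      ⨆ r : Set.Ioi (0 : ℝ), (r : ℝ) ^ J * ‖((r : ℝ) : ℂ) ^ l * f r‖ := by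
  refine le_ciSup (f := fun r : Set.Ioi (0 : ℝ) => (r : ℝ) ^ J * ‖((r : ℝ) : ℂ) ^ l * f r‖)
    ⟨SchwartzMap.seminorm ℝ (J + l) 0 f, ?_⟩ ⟨x, hx⟩
  rintro _ ⟨⟨r, hr⟩, rfl⟩
  calc r ^ J * ‖(r : ℂ) ^ l * f r‖ = ‖r‖ ^ (J + l) * ‖f r‖ := by
        rw [norm_mul, norm_pow, Complex.norm_real, Real.norm_of_nonneg hr.le, pow_add,
          mul_assoc]
    _ ≤ SchwartzMap.seminorm ℝ (J + l) 0 f := norm_pow_mul_le_seminorm ℝ f _ r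

theorem mul_inv_pow_succ_div_one_sub_inv {A : ℝ} (hA : 1 < A) (C : ℝ) (M : ℕ) :
    C * A⁻¹ ^ (M + 1) / (1 - A⁻¹) = C / (A - 1) / A ^ M := by
  have : A - 1 ≠ 0 := by linarith
  have : A ≠ 0 := by positivity
  rw [inv_pow]
  field_simp
  ring

theorem stmt5_general (l J : ℕ) (hl : 1 ≤ l) (hJ : 1 ≤ J)
    (f₀ : SchwartzMap ℝ ℂ)
    (f : ℝ → ℂ) (hf : ∀ s : ℝ, f s = (s : ℂ) ^ l * f₀ s)
    (MJ : ℝ) (hMJ : MJ = ⨆ r : Set.Ioi (0 : ℝ), (r : ℝ) ^ J * ‖f (r : ℝ)‖)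
    (a : ℝ) (ha : 1 < a)
    (η L : ℝ) (hη : 0 < η)
    (c'L C'η : ℝ)
    (hc'L : c'L = L ^ (2 * l) * (⨆ s : Set.Ici (0 : ℝ), ‖f₀ (s : ℝ)‖) ^ 2 / (a ^ (4 * l) - 1))
    (hC'η : C'η = MJ ^ 2 / ((a ^ (4 * J) - 1) * η ^ (2 * J))) :
    ∀ lam ∈ Set.Icc η L,
      Summable (fun j : ℤ => ‖f (a ^ (2 * j) * lam)‖ ^ 2) ∧
      ∀ M N : ℕ,
        |(∑ j ∈ Finset.Icc (-(M : ℤ)) (N : ℤ), ‖f (a ^ (2 * j) * lam)‖ ^ 2) -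
            ∑' j : ℤ, ‖f (a ^ (2 * j) * lam)‖ ^ 2|
          ≤ c'L / a ^ (4 * M * l) + C'η / a ^ (4 * N * J) := by
  obtain rfl : f = fun s : ℝ => (s : ℂ) ^ l * f₀ s := funext hf
  have hsmall : ∀ x : ℝ, 0 ≤ x →
      ‖(x : ℂ) ^ l * f₀ x‖ ≤ (⨆ s : Set.Ici (0 : ℝ), ‖f₀ s‖) * x ^ l := by
    intro x hx
    rw [norm_mul, norm_pow, Complex.norm_real, Real.norm_of_nonneg hx, mul_comm]
    gcongr
    exact f₀.norm_le_iSup_Ici hx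
  have hlarge : ∀ x : ℝ, 0 < x → x ^ J * ‖(x : ℂ) ^ l * f₀ x‖ ≤ MJ := fun x hx =>
    hMJ ▸ f₀.pow_mul_norm_ofReal_pow_mul_le_iSup l J hx
  have ha₀ : 0 < a := one_pos.trans ha
  have hA : 1 < a ^ (4 * l) := one_lt_pow₀ ha (by omega)
  have hB : 1 < a ^ (4 * J) := one_lt_pow₀ ha (by omega)
  intro lam ⟨hηlam, hlamL⟩
  have hneg := sq_norm_le_of_norm_le_mul_pow hsmall ha₀ (hη.le.trans hηlam) hlamL
  have hpos := sq_norm_le_of_pow_mul_norm_le hlarge ha₀ hη hηlam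
  have hq := inv_lt_one_of_one_lt₀ hA
  have hr := inv_lt_one_of_one_lt₀ hB
  refine ⟨summable_int_of_le_geometric (fun _ => sq_nonneg _) (by positivity) hq (by positivity)
    hr hneg hpos, fun M N => ?_⟩
  refine (abs_sum_Icc_sub_tsum_le_of_le_geometric (fun _ => sq_nonneg _) (by positivity) hq
    (by positivity) hr hneg hpos M N).trans_eq ?_
  rw [mul_inv_pow_succ_div_one_sub_inv hA, mul_inv_pow_succ_div_one_sub_inv hB, hc'L, hC'η,
    mul_comm (a ^ (4 * J) - 1), ← div_div]
  ring

/-- Quantitative convergence of the truncated Daubechies sum: with `f s = s^l f₀ s`,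
`M_J = sup_{r>0} r^J |f(r)|`, `a > 1`, `0 < η < L`, the series
`h(λ) = Σ_{j∈ℤ} |f(a^{2j}λ)|²` converges for `λ ∈ [η, L]` and for all `M, N ≥ 0`
`|Σ_{j=-M}^N |f(a^{2j}λ)|² − h(λ)| ≤ c'_L / a^{4Ml} + C'_η / a^{4NJ}` where
`c'_L = L^{2l} ‖f₀‖_∞² / (a^{4l} − 1)` and `C'_η = M_J² / ((a^{4J} − 1) η^{2J})`. -/
theorem stmt5 (l J : ℕ) (hl : 1 ≤ l) (hJ : 1 ≤ J)
    (f₀ : SchwartzMap ℝ ℂ) (hf₀ : ∃ s : ℝ, 0 < s ∧ f₀ s ≠ 0)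
    (f : ℝ → ℂ) (hf : ∀ s : ℝ, f s = (s : ℂ) ^ l * f₀ s)
    (MJ : ℝ) (hMJ : MJ = ⨆ r : Set.Ioi (0 : ℝ), (r : ℝ) ^ J * ‖f (r : ℝ)‖)
    (a : ℝ) (ha : 1 < a)
    (η L : ℝ) (hη : 0 < η) (hηL : η < L)
    (c'L C'η : ℝ)
    (hc'L : c'L = L ^ (2 * l) * (⨆ s : Set.Ici (0 : ℝ), ‖f₀ (s : ℝ)‖) ^ 2 / (a ^ (4 * l) - 1))
    (hC'η : C'η = MJ ^ 2 / ((a ^ (4 * J) - 1) * η ^ (2 * J))) :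
    ∀ lam ∈ Set.Icc η L,
      Summable (fun j : ℤ => ‖f (a ^ (2 * j) * lam)‖ ^ 2) ∧
      ∀ M N : ℕ,
        |(∑ j ∈ Finset.Icc (-(M : ℤ)) (N : ℤ), ‖f (a ^ (2 * j) * lam)‖ ^ 2) -
            ∑' j : ℤ, ‖f (a ^ (2 * j) * lam)‖ ^ 2|
          ≤ c'L / a ^ (4 * M * l) + C'η / a ^ (4 * N * J) :=
  stmt5_general l J hl hJ f₀ f hf MJ hMJ a ha η L hη c'L C'η hc'L hC'η
end

section
/- Let G : ℝ → ℂ be a smooth function which is a symbol of order 1, i.e. for every integer j ≥ 0 there is C_j with |G^{(j)}(ξ)| ≤ C_j (1+|ξ|)^{1-j} for all ξ ∈ ℝ. Then for every integer N ≥ 0 there exists C > 0 such that for all 0 < t < 1, Σ_{0 ≤ j ≤ N} sup_ξ [(1+|ξ|)^{j-1} |d^j/dξ^j (G(tξ) − G(0))|] ≤ C·t. In particular G_t → G(0) in the symbol topology of order 1 as t → 0⁺. -/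
lemma stmt7_key (G : ℝ → ℂ) (hG : ContDiff ℝ (⊤ : ℕ∞) G)
    (hsym : ∀ j : ℕ, ∃ C : ℝ, ∀ ξ : ℝ,
      ‖iteratedDeriv j G ξ‖ ≤ C * (1 + |ξ|) ^ ((1 : ℝ) - (j : ℝ))) (j : ℕ) :
    ∃ D : ℝ, 0 ≤ D ∧ ∀ t : ℝ, 0 < t → t < 1 → ∀ ξ : ℝ,
      (1 + |ξ|) ^ ((j : ℝ) - 1) *
        ‖iteratedDeriv j (fun x => G (t * x) - G 0) ξ‖ ≤ D * t := by
  match j with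
  | 0 =>
    obtain ⟨C, hC⟩ := hsym 1
    refine ⟨max C 0, le_max_right _ _, fun t ht ht1 ξ => ?_⟩
    have hderiv : ∀ x : ℝ, ‖deriv G x‖ ≤ max C 0 := by
      intro x
      have := hC x
      simp only [Nat.cast_one, sub_self, Real.rpow_zero, mul_one] at this
      rw [← iteratedDeriv_one]
      exact this.trans (le_max_left _ _)
    have hmvt : ‖G (t * ξ) - G 0‖ ≤ max C 0 * ‖(t * ξ) - 0‖ := by
      apply Convex.norm_image_sub_le_of_norm_deriv_le
        (fun x _ => (hG.differentiable (by simp)).differentiableAt)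
        (fun x _ => hderiv x) convex_univ (Set.mem_univ _) (Set.mem_univ _)
    have ha : (0:ℝ) < 1 + |ξ| := by positivity
    have h1 : ‖G (t * ξ) - G 0‖ ≤ max C 0 * (t * (1 + |ξ|)) := by
      refine hmvt.trans ?_
      have : ‖t * ξ - 0‖ = t * |ξ| := by
        rw [sub_zero, Real.norm_eq_abs, abs_mul, abs_of_pos ht]
      rw [this]
      have : t * |ξ| ≤ t * (1 + |ξ|) := by nlinarith [abs_nonneg ξ]
      nlinarith [le_max_right C 0]
    simp only [iteratedDeriv_zero, Nat.cast_zero, zero_sub]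
    rw [Real.rpow_neg_one]
    rw [inv_mul_le_iff₀ ha]
    calc ‖G (t * ξ) - G 0‖ ≤ max C 0 * (t * (1 + |ξ|)) := h1
      _ = (1 + |ξ|) * (max C 0 * t) := by ring
  | (k + 1) =>
    obtain ⟨C, hC⟩ := hsym (k + 1)
    refine ⟨max C 0, le_max_right _ _, fun t ht ht1 ξ => ?_⟩
    set D := max C 0 with hD
    have hD0 : 0 ≤ D := le_max_right _ _
    have heq : iteratedDeriv (k + 1) (fun x => G (t * x) - G 0) ξ
        = (t : ℝ) ^ (k + 1) • iteratedDeriv (k + 1) G (t * ξ) := by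
      have h1 : iteratedDeriv (k + 1) (fun x => G (t * x) - G 0) ξ
          = iteratedDeriv (k + 1) (fun x => G (t * x)) ξ := by
        rw [iteratedDeriv_succ', iteratedDeriv_succ']
        congr 1
        funext x
        exact deriv_sub_const _
      rw [h1, iteratedDeriv_comp_const_smul (hG.of_le (by exact_mod_cast le_top)) t]
    have ha : (0:ℝ) < 1 + |ξ| := by positivity
    have hb : (0:ℝ) < 1 + |t * ξ| := by positivity
    have hta : 0 < t * (1 + |ξ|) := by positivity
    have htab : t * (1 + |ξ|) ≤ 1 + |t * ξ| := by
      rw [abs_mul, abs_of_pos ht]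
      nlinarith [abs_nonneg ξ]
    set e : ℝ := (k : ℝ) with he
    have he0 : (0:ℝ) ≤ e := Nat.cast_nonneg k
    have hnorm : ‖iteratedDeriv (k + 1) G (t * ξ)‖ ≤ D * (1 + |t * ξ|) ^ (-e) := by
      have := hC (t * ξ)
      have hexp : (1 : ℝ) - ((k + 1 : ℕ) : ℝ) = -e := by push_cast [he]; ring
      rw [hexp] at this
      refine this.trans ?_
      have : (0:ℝ) ≤ (1 + |t * ξ|) ^ (-e) := (Real.rpow_pos_of_pos hb _).le
      nlinarith [le_max_left C 0]
    have hbb : (1 + |t * ξ|) ^ (-e) ≤ (t * (1 + |ξ|)) ^ (-e) :=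
      Real.rpow_le_rpow_of_nonpos hta htab (neg_nonpos.mpr he0)
    have hexp2 : ((k + 1 : ℕ) : ℝ) - 1 = e := by push_cast [he]; ring
    rw [heq, hexp2]
    rw [norm_smul, Real.norm_eq_abs, abs_pow, abs_of_pos ht]
    calc (1 + |ξ|) ^ e * (t ^ (k + 1) * ‖iteratedDeriv (k + 1) G (t * ξ)‖)
        ≤ (1 + |ξ|) ^ e * (t ^ (k + 1) * (D * (t * (1 + |ξ|)) ^ (-e))) := by
          have h := hnorm.trans (by nlinarith [hbb] : D * (1 + |t * ξ|) ^ (-e) ≤ D * (t * (1 + |ξ|)) ^ (-e))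
          have h1 : (0:ℝ) ≤ (1 + |ξ|) ^ e := (Real.rpow_pos_of_pos ha _).le
          have h2 : (0:ℝ) ≤ t ^ (k + 1) := by positivity
          exact mul_le_mul_of_nonneg_left (mul_le_mul_of_nonneg_left h h2) h1
      _ = D * t := by
          rw [Real.mul_rpow ht.le ha.le]
          have h1 : (1 + |ξ|) ^ e * (1 + |ξ|) ^ (-e) = 1 := by
            rw [← Real.rpow_add ha]; simp
          have h2 : t ^ (k + 1) * t ^ (-e) = t := by
            rw [← Real.rpow_natCast t (k + 1), ← Real.rpow_add ht]
            have : ((k + 1 : ℕ) : ℝ) + (-e) = 1 := by push_cast [he]; ring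
            rw [this, Real.rpow_one]
          calc (1 + |ξ|) ^ e * (t ^ (k + 1) * (D * (t ^ (-e) * (1 + |ξ|) ^ (-e))))
              = D * (t ^ (k + 1) * t ^ (-e)) * ((1 + |ξ|) ^ e * (1 + |ξ|) ^ (-e)) := by ring
            _ = D * t := by rw [h1, h2]; ring

/-- If `G` is a symbol of order `1` on `ℝ` (depending only on `ξ`), then for every `N`
there is `C > 0` such that for all `0 < t < 1`,
`Σ_{0≤j≤N} sup_ξ (1+|ξ|)^{j-1} |d^j/dξ^j (G(tξ) − G(0))| ≤ C t`; in particular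
`G_t → G(0)` in the topology of symbols of order 1 as `t → 0⁺`. -/
theorem stmt7 (G : ℝ → ℂ) (hG : ContDiff ℝ (⊤ : ℕ∞) G)
    (hsym : ∀ j : ℕ, ∃ C : ℝ, ∀ ξ : ℝ,
      ‖iteratedDeriv j G ξ‖ ≤ C * (1 + |ξ|) ^ ((1 : ℝ) - (j : ℝ))) :
    ∀ N : ℕ, ∃ C : ℝ, 0 < C ∧ ∀ t : ℝ, 0 < t → t < 1 →
      (∑ j ∈ Finset.range (N + 1),
          ⨆ ξ : ℝ, (1 + |ξ|) ^ ((j : ℝ) - 1) *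
            ‖iteratedDeriv j (fun x => G (t * x) - G 0) ξ‖)
        ≤ C * t := by
  intro N
  choose D hD0 hD using stmt7_key G hG hsym
  have hsum : 0 ≤ ∑ j ∈ Finset.range (N + 1), D j := Finset.sum_nonneg fun j _ => hD0 j
  refine ⟨(∑ j ∈ Finset.range (N + 1), D j) + 1, by linarith, fun t ht ht1 => ?_⟩
  have hstep : ∀ j ∈ Finset.range (N + 1),
      (⨆ ξ : ℝ, (1 + |ξ|) ^ ((j : ℝ) - 1) *
        ‖iteratedDeriv j (fun x => G (t * x) - G 0) ξ‖) ≤ D j * t := by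
    intro j _
    exact ciSup_le (fun ξ => hD j t ht ht1 ξ)
  calc (∑ j ∈ Finset.range (N + 1),
          ⨆ ξ : ℝ, (1 + |ξ|) ^ ((j : ℝ) - 1) *
            ‖iteratedDeriv j (fun x => G (t * x) - G 0) ξ‖)
      ≤ ∑ j ∈ Finset.range (N + 1), D j * t := Finset.sum_le_sum hstep
    _ = (∑ j ∈ Finset.range (N + 1), D j) * t := by rw [Finset.sum_mul]
    _ ≤ ((∑ j ∈ Finset.range (N + 1), D j) + 1) * t := by nlinarith
end

section
/- Let (X,d) be a metric space, μ a Borel measure on X, n > 0, and c₄ > 0, and suppose μ(B(x,r)) ≤ c₄ r^n for every x ∈ X and r > 0. Then for every N > n there exists a constant C''_N (depending only on N, n, c₄) such that ∫_X (1 + d(x,z)/t)^{-N} (1 + d(z,y)/t)^{-N} dμ(z) ≤ C''_N t^n (1 + d(x,y)/t)^{-N} for all x, y ∈ X and t > 0. -/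
/-!
One of `d(x,z)`, `d(z,y)` is at least `d(x,y)/2`, so the corresponding factor is at most
`2ᴺ (1 + d(x,y)/t)⁻ᴺ`; hence the integrand is at most `2ᴺ (1 + d(x,y)/t)⁻ᴺ` times the sum of the
two factors, and each factor integrates to `O(tⁿ)`. For the latter, `(1 + d(x,z)/t)⁻ᴺ` is dominated
by `∑ₖ 2ᴺ 2⁻ᵏᴺ 𝟙_{B(x, 2ᵏt)}(z)`, and `μ(B(x, 2ᵏt)) ≤ c₄ 2ᵏⁿ tⁿ`, so the integral is at most
`2ᴺ c₄ tⁿ ∑ₖ 2^{k(n-N)}`, a convergent geometric series since `N > n`.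
-/

open MeasureTheory Metric

lemma rpow_neg_le_two_rpow_mul_of_le_two_mul {u v N : ℝ} (hu : 0 < u) (hN : 0 ≤ N)
    (h : u ≤ 2 * v) :
    v ^ (-N) ≤ 2 ^ N * u ^ (-N) :=
  calc v ^ (-N) ≤ (u / 2) ^ (-N) := Real.rpow_le_rpow_of_nonpos (by positivity) (by linarith)
        (by linarith)
    _ = 2 ^ N * u ^ (-N) := by
        rw [Real.div_rpow hu.le zero_le_two, Real.rpow_neg zero_le_two]
        field_simp

lemma rpow_neg_mul_rpow_neg_le {a b D N : ℝ} (ha : 0 ≤ a) (hb : 0 ≤ b) (hD : 0 ≤ D)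
    (hN : 0 ≤ N) (hDab : D ≤ a + b) :
    (1 + a) ^ (-N) * (1 + b) ^ (-N) ≤
      2 ^ N * (1 + D) ^ (-N) * ((1 + a) ^ (-N) + (1 + b) ^ (-N)) := by
  set K := 2 ^ N * (1 + D) ^ (-N)
  have hA : 0 ≤ (1 + a) ^ (-N) := by positivity
  have hB : 0 ≤ (1 + b) ^ (-N) := by positivity
  have hK : 0 ≤ K := by positivity
  rcases le_total b a with hba | hab
  · have hAK : (1 + a) ^ (-N) ≤ K :=
      rpow_neg_le_two_rpow_mul_of_le_two_mul (by linarith) hN (by linarith)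
    calc (1 + a) ^ (-N) * (1 + b) ^ (-N) ≤ K * (1 + b) ^ (-N) := by gcongr
      _ ≤ K * ((1 + a) ^ (-N) + (1 + b) ^ (-N)) := by gcongr; linarith
  · have hBK : (1 + b) ^ (-N) ≤ K :=
      rpow_neg_le_two_rpow_mul_of_le_two_mul (by linarith) hN (by linarith)
    calc (1 + a) ^ (-N) * (1 + b) ^ (-N) ≤ (1 + a) ^ (-N) * K := by gcongr
      _ ≤ K * ((1 + a) ^ (-N) + (1 + b) ^ (-N)) := by rw [mul_comm]; gcongr; linarith

lemma ofReal_one_add_dist_div_rpow_neg_mul_le {X : Type*} [PseudoMetricSpace X] {x y z : X}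
    {t N : ℝ} (ht : 0 < t) (hN : 0 ≤ N) :
    ENNReal.ofReal ((1 + dist x z / t) ^ (-N) * (1 + dist z y / t) ^ (-N)) ≤
      ENNReal.ofReal (2 ^ N * (1 + dist x y / t) ^ (-N)) *
        (ENNReal.ofReal ((1 + dist x z / t) ^ (-N)) +
          ENNReal.ofReal ((1 + dist z y / t) ^ (-N))) := by
  have hxz : 0 ≤ dist x z / t := by positivity
  have hzy : 0 ≤ dist z y / t := by positivity
  rw [← ENNReal.ofReal_add (by positivity) (by positivity), ← ENNReal.ofReal_mul (by positivity)]
  refine ENNReal.ofReal_le_ofReal (rpow_neg_mul_rpow_neg_le hxz hzy (by positivity) hN ?_)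
  rw [← add_div]
  gcongr
  exact dist_triangle x z y

lemma exists_two_pow_lt_and_le {s : ℝ} (hs : 0 ≤ s) :
    ∃ k : ℕ, s < 2 ^ k ∧ 2 ^ k ≤ 2 * (1 + s) := by
  obtain ⟨k, hk, hk'⟩ := exists_nat_pow_near (by linarith : 1 ≤ 1 + s) one_lt_two
  exact ⟨k + 1, by linarith, by rw [pow_succ]; linarith⟩

lemma ofReal_one_add_dist_div_rpow_neg_le_tsum {X : Type*} [PseudoMetricSpace X] (x z : X)
    {t N : ℝ} (ht : 0 < t) (hN : 0 ≤ N) :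
    ENNReal.ofReal ((1 + dist x z / t) ^ (-N)) ≤
      ∑' k : ℕ, (ball x (2 ^ k * t)).indicator
        (fun _ ↦ ENNReal.ofReal (2 ^ N * ((2 : ℝ) ^ k) ^ (-N))) z := by
  obtain ⟨k, hlt, hle⟩ :=
    exists_two_pow_lt_and_le (div_nonneg (dist_nonneg (x := x) (y := z)) ht.le)
  have hz : z ∈ ball x (2 ^ k * t) := by
    rw [mem_ball, dist_comm, ← div_lt_iff₀ ht]
    exact hlt
  refine le_trans ?_ (ENNReal.le_tsum k)
  rw [Set.indicator_of_mem hz]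
  exact ENNReal.ofReal_le_ofReal (rpow_neg_le_two_rpow_mul_of_le_two_mul (by positivity) hN hle)

lemma lintegral_one_add_dist_div_rpow_neg_le {X : Type*} [PseudoMetricSpace X]
    [MeasurableSpace X] [OpensMeasurableSpace X] {μ : Measure X} {n c N : ℝ} (hc : 0 ≤ c)
    (hN : 0 ≤ N) (hnN : n < N)
    (hμ : ∀ (x : X) (r : ℝ), 0 < r → μ (ball x r) ≤ ENNReal.ofReal (c * r ^ n))
    (x : X) {t : ℝ} (ht : 0 < t) :
    ∫⁻ z, ENNReal.ofReal ((1 + dist x z / t) ^ (-N)) ∂μ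
      ≤ ENNReal.ofReal (2 ^ N * c / (1 - 2 ^ (n - N)) * t ^ n) := by
  set ρ : ℝ := 2 ^ (n - N)
  have hρ0 : 0 ≤ ρ := by positivity
  have hρ1 : ρ < 1 := Real.rpow_lt_one_of_one_lt_of_neg one_lt_two (by linarith)
  have hball : ∀ k : ℕ, ENNReal.ofReal (2 ^ N * ((2 : ℝ) ^ k) ^ (-N)) * μ (ball x (2 ^ k * t))
      ≤ ENNReal.ofReal (2 ^ N * c * t ^ n * ρ ^ k) := fun k ↦ calc
    _ ≤ ENNReal.ofReal (2 ^ N * ((2 : ℝ) ^ k) ^ (-N)) * ENNReal.ofReal (c * (2 ^ k * t) ^ n) := by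
        gcongr
        exact hμ x _ (by positivity)
    _ = ENNReal.ofReal (2 ^ N * c * t ^ n * ρ ^ k) := by
        have hpow : ((2 : ℝ) ^ k) ^ (-N) * ((2 : ℝ) ^ k) ^ n = ρ ^ k := by
          rw [← Real.rpow_add (by positivity), ← Real.rpow_pow_comm zero_le_two, neg_add_eq_sub]
        rw [← ENNReal.ofReal_mul (by positivity), Real.mul_rpow (by positivity) ht.le, ← hpow]
        ring_nf
  calc ∫⁻ z, ENNReal.ofReal ((1 + dist x z / t) ^ (-N)) ∂μ
      ≤ ∫⁻ z, ∑' k : ℕ, (ball x (2 ^ k * t)).indicator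
          (fun _ ↦ ENNReal.ofReal (2 ^ N * ((2 : ℝ) ^ k) ^ (-N))) z ∂μ :=
        lintegral_mono fun z ↦ ofReal_one_add_dist_div_rpow_neg_le_tsum x z ht hN
    _ = ∑' k : ℕ, ENNReal.ofReal (2 ^ N * ((2 : ℝ) ^ k) ^ (-N)) * μ (ball x (2 ^ k * t)) := by
        rw [lintegral_tsum fun k ↦ (measurable_const.indicator measurableSet_ball).aemeasurable]
        simp only [lintegral_indicator measurableSet_ball, setLIntegral_const]
    _ ≤ ∑' k : ℕ, ENNReal.ofReal (2 ^ N * c * t ^ n * ρ ^ k) := ENNReal.tsum_le_tsum hball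
    _ = ENNReal.ofReal (2 ^ N * c / (1 - ρ) * t ^ n) := by
        rw [← ENNReal.ofReal_tsum_of_nonneg (fun k ↦ by positivity)
          ((summable_geometric_of_lt_one hρ0 hρ1).mul_left _), tsum_mul_left,
          tsum_geometric_of_lt_one hρ0 hρ1]
        ring_nf

/-- On a metric measure space with the upper Ahlfors regularity `μ(B(x,r)) ≤ c₄ rⁿ`,
for every `N > n` there is a constant `C''` (depending only on `N`, `n`, `c₄`) such that
`∫ (1 + d(x,z)/t)^{-N} (1 + d(z,y)/t)^{-N} dμ(z) ≤ C'' tⁿ (1 + d(x,y)/t)^{-N}`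
for all `x`, `y` and `t > 0`. -/
theorem stmt10 (n : ℝ) (hn : 0 < n) (c₄ : ℝ) (hc₄ : 0 < c₄) (N : ℝ) (hN : n < N) :
    ∃ C'' : ℝ, 0 < C'' ∧
      ∀ (X : Type) [MetricSpace X] [MeasurableSpace X] [BorelSpace X]
        (μ : Measure X),
        (∀ (x : X) (r : ℝ), 0 < r → μ (Metric.ball x r) ≤ ENNReal.ofReal (c₄ * r ^ n)) →
        ∀ (x y : X) (t : ℝ), 0 < t →
          ∫⁻ z, ENNReal.ofReal
              ((1 + dist x z / t) ^ (-N) * (1 + dist z y / t) ^ (-N)) ∂μ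
            ≤ ENNReal.ofReal (C'' * t ^ n * (1 + dist x y / t) ^ (-N)) := by
  have hN0 : 0 ≤ N := (hn.trans hN).le
  have hρ : (2 : ℝ) ^ (n - N) < 1 := Real.rpow_lt_one_of_one_lt_of_neg one_lt_two (by linarith)
  set C : ℝ := 2 ^ N * c₄ / (1 - 2 ^ (n - N))
  have hC : 0 < C := div_pos (by positivity) (by linarith)
  refine ⟨2 ^ (N + 1) * C, by positivity, fun X _ _ _ μ hμ x y t ht ↦ ?_⟩
  set K : ℝ := 2 ^ N * (1 + dist x y / t) ^ (-N)
  have hx := lintegral_one_add_dist_div_rpow_neg_le hc₄.le hN0 hN hμ x ht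
  have hy := lintegral_one_add_dist_div_rpow_neg_le hc₄.le hN0 hN hμ y ht
  simp only [dist_comm y] at hy
  calc ∫⁻ z, ENNReal.ofReal ((1 + dist x z / t) ^ (-N) * (1 + dist z y / t) ^ (-N)) ∂μ
      ≤ ∫⁻ z, ENNReal.ofReal K * (ENNReal.ofReal ((1 + dist x z / t) ^ (-N))
          + ENNReal.ofReal ((1 + dist z y / t) ^ (-N))) ∂μ := lintegral_mono fun z ↦
        ofReal_one_add_dist_div_rpow_neg_mul_le ht hN0
    _ = ENNReal.ofReal K * (∫⁻ z, ENNReal.ofReal ((1 + dist x z / t) ^ (-N)) ∂μ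
          + ∫⁻ z, ENNReal.ofReal ((1 + dist z y / t) ^ (-N)) ∂μ) := by
        rw [lintegral_const_mul' _ _ ENNReal.ofReal_ne_top, lintegral_add_left (by fun_prop)]
    _ ≤ ENNReal.ofReal K * (ENNReal.ofReal (C * t ^ n) + ENNReal.ofReal (C * t ^ n)) := by
        gcongr
    _ = ENNReal.ofReal (2 ^ (N + 1) * C * t ^ n * (1 + dist x y / t) ^ (-N)) := by
        rw [← ENNReal.ofReal_add (by positivity) (by positivity),
          ← ENNReal.ofReal_mul (by positivity), Real.rpow_add_one two_ne_zero]
        congr 1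
        ring
end

section
/- Let (X,d) be a metric space, μ a Borel measure on X, n > 0, c₄ > 0, with μ(B(x,r)) ≤ c₄ r^n for every x ∈ X and r > 0. Let 0 < α ≤ 1 and A > 0, and for each t > 0 let K_t : X × X → ℂ be measurable with ∫_X K_t(x,y) dμ(y) = 0 for every x ∈ X and |K_t(x,y)| ≤ A t^{-n}(1 + d(x,y)/t)^{-n-1-α} for all x, y ∈ X. If F : X → ℂ is Hölder continuous with exponent α, i.e. |F(x) − F(y)| ≤ H·d(x,y)^α for all x,y, then there is a constant C (depending only on A, H, c₄, n, α) such that |∫_X F(y) K_t(x,y) dμ(y)| ≤ C t^α for all x ∈ X and t > 0. -/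
/-!
Since `K_t(x, ·)` has vanishing integral, `∫ F K_t(x, ·) = ∫ (F - F x) K_t(x, ·)`. Hölder
continuity gives `|F y - F x| ≤ H t^α (1 + d(x,y)/t)^α`, which trades the extra decay `α` of the
kernel for the factor `t^α` and leaves the profile `t^{-n} (1 + d(x,y)/t)^{-(n+1)}`. That profile
has integral `O(1)`: on the ball `B(x,t)` it is at most `t^{-n}`, and on the dyadic annulus
`B(x, 2^{k+1} t) \ B(x, 2^k t)`, of measure at most `c₄ (2^{k+1} t)^n`, it is at most
`t^{-n} 2^{-k(n+1)}`, so the contributions form a geometric series.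
-/

open MeasureTheory Metric Set

section DyadicDecay

variable {X : Type*} [PseudoMetricSpace X]

lemma univ_subset_ball_union_iUnion_dyadic_annuli (x : X) {t : ℝ} (ht : 0 < t) :
    univ ⊆ ball x t ∪ ⋃ k : ℕ, ball x (2 ^ (k + 1) * t) \ ball x (2 ^ k * t) := by
  intro y _
  have hex : ∃ k : ℕ, y ∈ ball x (2 ^ k * t) := by
    obtain ⟨k, hk⟩ := pow_unbounded_of_one_lt (dist y x / t) one_lt_two
    exact ⟨k, by rwa [mem_ball, ← div_lt_iff₀ ht]⟩
  classical
  have hy := Nat.find_spec hex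
  rcases hk : Nat.find hex with _ | k
  · rw [hk, pow_zero, one_mul] at hy
    exact Or.inl hy
  · right
    rw [hk] at hy
    exact mem_iUnion.2 ⟨k, hy, Nat.find_min hex (hk ▸ k.lt_succ_self)⟩

variable [MeasurableSpace X]

def IsUpperAhlforsRegular (μ : Measure X) (c n : ℝ) : Prop :=
  ∀ (x : X) (r : ℝ), 0 < r → μ (ball x r) ≤ ENNReal.ofReal (c * r ^ n)

variable {μ : Measure X} {c n ε t : ℝ}

lemma one_sub_two_rpow_neg_pos (hε : 0 < ε) : 0 < 1 - (2 : ℝ) ^ (-ε) := by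
  linarith [Real.rpow_lt_one_of_one_lt_of_neg one_lt_two (neg_neg_of_pos hε)]

lemma lintegral_dyadic_annulus_le (hμ : IsUpperAhlforsRegular μ c n) (hn : 0 ≤ n)
    (hε : 0 < ε) (x : X) (ht : 0 < t) (k : ℕ) :
    ∫⁻ y in ball x (2 ^ (k + 1) * t) \ ball x (2 ^ k * t),
        ENNReal.ofReal ((1 + dist x y / t) ^ (-(n + ε))) ∂μ
      ≤ ENNReal.ofReal (c * 2 ^ n * t ^ n * ((2 : ℝ) ^ (-ε)) ^ k) := by
  have h2k : (0 : ℝ) < 2 ^ k := by positivity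
  have hdecay : ∀ y ∈ ball x (2 ^ (k + 1) * t) \ ball x (2 ^ k * t),
      ENNReal.ofReal ((1 + dist x y / t) ^ (-(n + ε)))
        ≤ ENNReal.ofReal (((2 : ℝ) ^ k) ^ (-(n + ε))) := by
    rintro y ⟨-, hy⟩
    have hfar : 2 ^ k * t ≤ dist x y := by simpa [mem_ball, dist_comm] using hy
    have : (2 : ℝ) ^ k ≤ 1 + dist x y / t := by
      have := (le_div_iff₀ ht).2 hfar
      linarith
    exact ENNReal.ofReal_le_ofReal (Real.rpow_le_rpow_of_nonpos h2k this (by linarith))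
  have hpow : ((2 : ℝ) ^ k) ^ (-(n + ε)) * (c * (2 ^ (k + 1) * t) ^ n)
      = c * 2 ^ n * t ^ n * ((2 : ℝ) ^ (-ε)) ^ k := by
    rw [Real.mul_rpow (by positivity) ht.le, ← Real.rpow_pow_comm zero_le_two,
      ← Real.rpow_pow_comm zero_le_two, neg_add, Real.rpow_add two_pos, mul_pow, pow_succ]
    have : ((2 : ℝ) ^ (-n)) ^ k * (2 ^ n) ^ k = 1 := by
      rw [← mul_pow, ← Real.rpow_add two_pos, neg_add_cancel, Real.rpow_zero, one_pow]
    linear_combination (c * 2 ^ n * t ^ n * ((2 : ℝ) ^ (-ε)) ^ k) * this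
  calc _ ≤ ∫⁻ _ in ball x (2 ^ (k + 1) * t) \ ball x (2 ^ k * t),
          ENNReal.ofReal (((2 : ℝ) ^ k) ^ (-(n + ε))) ∂μ :=
        setLIntegral_mono measurable_const hdecay
    _ = ENNReal.ofReal (((2 : ℝ) ^ k) ^ (-(n + ε))) *
          μ (ball x (2 ^ (k + 1) * t) \ ball x (2 ^ k * t)) := setLIntegral_const _ _
    _ ≤ ENNReal.ofReal (((2 : ℝ) ^ k) ^ (-(n + ε))) *
          ENNReal.ofReal (c * (2 ^ (k + 1) * t) ^ n) := by
        gcongr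
        exact (measure_mono sdiff_subset).trans (hμ x _ (by positivity))
    _ = _ := by rw [← ENNReal.ofReal_mul (by positivity), hpow]

lemma lintegral_decay_le (hμ : IsUpperAhlforsRegular μ c n) (hc : 0 ≤ c) (hn : 0 ≤ n)
    (hε : 0 < ε) (x : X) (ht : 0 < t) :
    ∫⁻ y, ENNReal.ofReal ((1 + dist x y / t) ^ (-(n + ε))) ∂μ
      ≤ ENNReal.ofReal (c * (1 + 2 ^ n / (1 - 2 ^ (-ε))) * t ^ n) := by
  set f : X → ENNReal := fun y ↦ ENNReal.ofReal ((1 + dist x y / t) ^ (-(n + ε)))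
  set q : ℝ := 2 ^ (-ε)
  have hq : q < 1 := by have := one_sub_two_rpow_neg_pos hε; linarith
  have hball : ∫⁻ y in ball x t, f y ∂μ ≤ ENNReal.ofReal (c * t ^ n) := by
    calc ∫⁻ y in ball x t, f y ∂μ ≤ ∫⁻ _ in ball x t, 1 ∂μ := by
          refine setLIntegral_mono measurable_const fun y _ ↦ ENNReal.ofReal_le_one.2 ?_
          exact Real.rpow_le_one_of_one_le_of_nonpos (le_add_of_nonneg_right (by positivity)) (by linarith)
      _ = μ (ball x t) := setLIntegral_one _
      _ ≤ ENNReal.ofReal (c * t ^ n) := hμ x t ht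
  have hgeom : ∑' k : ℕ, ENNReal.ofReal (c * 2 ^ n * t ^ n * q ^ k)
      = ENNReal.ofReal (c * 2 ^ n * t ^ n * (1 - q)⁻¹) := by
    have hsum := (summable_geometric_of_lt_one (by positivity) hq).mul_left (c * 2 ^ n * t ^ n)
    rw [← ENNReal.ofReal_tsum_of_nonneg (fun k ↦ by positivity) hsum, tsum_mul_left,
      tsum_geometric_of_lt_one (by positivity) hq]
  calc ∫⁻ y, f y ∂μ
      ≤ ∫⁻ y in ball x t ∪ ⋃ k : ℕ, ball x (2 ^ (k + 1) * t) \ ball x (2 ^ k * t), f y ∂μ := by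
        rw [← setLIntegral_univ]
        exact lintegral_mono_set (univ_subset_ball_union_iUnion_dyadic_annuli x ht)
    _ ≤ ∫⁻ y in ball x t, f y ∂μ
          + ∑' k : ℕ, ∫⁻ y in ball x (2 ^ (k + 1) * t) \ ball x (2 ^ k * t), f y ∂μ :=
        (lintegral_union_le _ _ _).trans (add_le_add_right (lintegral_iUnion_le _ _) _)
    _ ≤ ENNReal.ofReal (c * t ^ n) + ∑' k : ℕ, ENNReal.ofReal (c * 2 ^ n * t ^ n * q ^ k) :=
        add_le_add hball (ENNReal.tsum_le_tsum (lintegral_dyadic_annulus_le hμ hn hε x ht))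
    _ = ENNReal.ofReal (c * (1 + 2 ^ n / (1 - q)) * t ^ n) := by
        rw [hgeom, ← ENNReal.ofReal_add (by positivity) (by positivity)]
        congr 1
        ring

variable [OpensMeasurableSpace X]

lemma integrable_decay (hμ : IsUpperAhlforsRegular μ c n) (hc : 0 ≤ c) (hn : 0 ≤ n)
    (hε : 0 < ε) (x : X) (ht : 0 < t) :
    Integrable (fun y ↦ (1 + dist x y / t) ^ (-(n + ε))) μ := by
  have hmeas : Measurable fun y ↦ (1 + dist x y / t) ^ (-(n + ε)) := by fun_prop
  refine ⟨hmeas.aestronglyMeasurable, ?_⟩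
  rw [hasFiniteIntegral_iff_ofReal (ae_of_all _ fun y ↦ by positivity)]
  exact (lintegral_decay_le hμ hc hn hε x ht).trans_lt ENNReal.ofReal_lt_top

lemma integral_decay_le (hμ : IsUpperAhlforsRegular μ c n) (hc : 0 ≤ c) (hn : 0 ≤ n)
    (hε : 0 < ε) (x : X) (ht : 0 < t) :
    ∫ y, (1 + dist x y / t) ^ (-(n + ε)) ∂μ ≤ c * (1 + 2 ^ n / (1 - 2 ^ (-ε))) * t ^ n := by
  have hq := one_sub_two_rpow_neg_pos hε
  rw [integral_eq_lintegral_of_nonneg_ae (ae_of_all _ fun y ↦ by positivity)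
    (integrable_decay hμ hc hn hε x ht).aestronglyMeasurable]
  exact ENNReal.toReal_le_of_le_ofReal (by positivity) (lintegral_decay_le hμ hc hn hε x ht)

end DyadicDecay

lemma norm_mul_le_of_holder_of_decay {d t α s H B : ℝ} {u v : ℂ} (hd : 0 ≤ d) (ht : 0 < t)
    (hα : 0 ≤ α) (hH : 0 ≤ H) (hu : ‖u‖ ≤ H * d ^ α)
    (hv : ‖v‖ ≤ B * (1 + d / t) ^ (-(s + α))) :
    ‖u * v‖ ≤ H * B * t ^ α * (1 + d / t) ^ (-s) := by
  have hw : 0 < 1 + d / t := by positivity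
  have hd_le : d ^ α ≤ t ^ α * (1 + d / t) ^ α := by
    rw [← Real.mul_rpow ht.le hw.le, mul_add, mul_one, mul_div_cancel₀ _ ht.ne']
    exact Real.rpow_le_rpow hd (by linarith) hα
  have hexp : (1 + d / t) ^ α * (1 + d / t) ^ (-(s + α)) = (1 + d / t) ^ (-s) := by
    rw [← Real.rpow_add hw]
    ring_nf
  have hv0 : 0 ≤ B * (1 + d / t) ^ (-(s + α)) := (norm_nonneg v).trans hv
  calc ‖u * v‖ = ‖u‖ * ‖v‖ := norm_mul u v
    _ ≤ H * d ^ α * (B * (1 + d / t) ^ (-(s + α))) :=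
        mul_le_mul hu hv (norm_nonneg v) ((norm_nonneg u).trans hu)
    _ ≤ H * (t ^ α * (1 + d / t) ^ α) * (B * (1 + d / t) ^ (-(s + α))) := by gcongr
    _ = H * B * t ^ α * ((1 + d / t) ^ α * (1 + d / t) ^ (-(s + α))) := by ring
    _ = H * B * t ^ α * (1 + d / t) ^ (-s) := by rw [hexp]

lemma integral_mul_eq_integral_sub_const_mul {α : Type*} [MeasurableSpace α] {μ : Measure α}
    {f k : α → ℂ} (c : ℂ) (hk : Integrable k μ) (hfk : Integrable (fun y ↦ (f y - c) * k y) μ)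
    (hk0 : ∫ y, k y ∂μ = 0) :
    ∫ y, f y * k y ∂μ = ∫ y, (f y - c) * k y ∂μ := by
  have hsplit : (fun y ↦ f y * k y) = fun y ↦ (f y - c) * k y + c * k y := by
    funext y; ring
  rw [hsplit, integral_add hfk (hk.const_mul c), integral_const_mul, hk0, mul_zero, add_zero]

theorem stmt12_general (n c₄ α A H : ℝ) (hn : 0 < n) (hc₄ : 0 < c₄)
    (hα : 0 < α) (hA : 0 < A) (hH : 0 < H) :
    ∃ C : ℝ, 0 < C ∧
      ∀ (X : Type) [MetricSpace X] [MeasurableSpace X] [BorelSpace X]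
        (μ : Measure X) (K : ℝ → X → X → ℂ) (F : X → ℂ),
        (∀ (x : X) (r : ℝ), 0 < r → μ (Metric.ball x r) ≤ ENNReal.ofReal (c₄ * r ^ n)) →
        (∀ t : ℝ, 0 < t → Measurable (Function.uncurry (K t))) →
        (∀ t : ℝ, 0 < t → ∀ x : X, ∫ y, K t x y ∂μ = 0) →
        (∀ t : ℝ, 0 < t → ∀ x y : X,
          ‖K t x y‖ ≤ A * t ^ (-n) * (1 + dist x y / t) ^ (-(n + 1 + α))) →
        Measurable F →
        (∀ x y : X, ‖F x - F y‖ ≤ H * dist x y ^ α) →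
        ∀ (x : X) (t : ℝ), 0 < t →
          ‖∫ y, F y * K t x y ∂μ‖ ≤ C * t ^ α := by
  have hq := one_sub_two_rpow_neg_pos (ε := 1) one_pos
  refine ⟨A * H * (c₄ * (1 + 2 ^ n / (1 - 2 ^ (-1 : ℝ)))), by positivity, ?_⟩
  intro X _ _ _ μ K F hμ hKmeas hKzero hKbd hFmeas hFhold x t ht
  have hKx : Measurable (K t x) := (hKmeas t ht).of_uncurry_left
  have hK_int : Integrable (K t x) μ :=
    ((integrable_decay hμ hc₄.le hn.le (by positivity : 0 < 1 + α) x ht).const_mul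
      (A * t ^ (-n))).mono' hKx.aestronglyMeasurable
      (ae_of_all _ fun y ↦ by simpa only [add_assoc] using hKbd t ht x y)
  have hG_le (y : X) : ‖(F y - F x) * K t x y‖
      ≤ H * (A * t ^ (-n)) * t ^ α * (1 + dist x y / t) ^ (-(n + 1)) :=
    norm_mul_le_of_holder_of_decay dist_nonneg ht hα.le hH.le
      (by simpa only [dist_comm] using hFhold y x) (hKbd t ht x y)
  have hdecay_int := integrable_decay hμ hc₄.le hn.le one_pos x ht
  have hG_int : Integrable (fun y ↦ (F y - F x) * K t x y) μ :=
    (hdecay_int.const_mul _).mono' ((hFmeas.sub measurable_const).mul hKx).aestronglyMeasurable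
      (ae_of_all _ hG_le)
  have htn : t ^ (-n) * t ^ n = 1 := by
    rw [← Real.rpow_add ht, neg_add_cancel, Real.rpow_zero]
  rw [integral_mul_eq_integral_sub_const_mul (F x) hK_int hG_int (hKzero t ht x)]
  calc _ ≤ ∫ y, H * (A * t ^ (-n)) * t ^ α * (1 + dist x y / t) ^ (-(n + 1)) ∂μ :=
        norm_integral_le_of_norm_le (hdecay_int.const_mul _) (ae_of_all _ hG_le)
    _ = H * (A * t ^ (-n)) * t ^ α * ∫ y, (1 + dist x y / t) ^ (-(n + 1)) ∂μ :=
        integral_const_mul _ _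
    _ ≤ H * (A * t ^ (-n)) * t ^ α * (c₄ * (1 + 2 ^ n / (1 - 2 ^ (-1 : ℝ))) * t ^ n) := by
        gcongr
        exact integral_decay_le hμ hc₄.le hn.le one_pos x ht
    _ = _ := by
        linear_combination (A * H * (c₄ * (1 + 2 ^ n / (1 - 2 ^ (-1 : ℝ)))) * t ^ α) * htn

/-- Hölder continuity implies decay of the wavelet transform: on a metric measure space
with upper Ahlfors regularity `μ(B(x,r)) ≤ c₄ rⁿ`, if `K_t` satisfies `∫ K_t(x,y)dμ(y)=0`
and `|K_t(x,y)| ≤ A t^{-n}(1+d(x,y)/t)^{-n-1-α}`, and `F` is Hölder continuous with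
exponent `α` and constant `H`, then `|∫ F(y) K_t(x,y) dμ(y)| ≤ C t^α` with `C`
depending only on `A`, `H`, `c₄`, `n`, `α`. -/
theorem stmt12 (n c₄ α A H : ℝ) (hn : 0 < n) (hc₄ : 0 < c₄)
    (hα : 0 < α) (hα1 : α ≤ 1) (hA : 0 < A) (hH : 0 < H) :
    ∃ C : ℝ, 0 < C ∧
      ∀ (X : Type) [MetricSpace X] [MeasurableSpace X] [BorelSpace X]
        (μ : Measure X) (K : ℝ → X → X → ℂ) (F : X → ℂ),
        (∀ (x : X) (r : ℝ), 0 < r → μ (Metric.ball x r) ≤ ENNReal.ofReal (c₄ * r ^ n)) →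
        (∀ t : ℝ, 0 < t → Measurable (Function.uncurry (K t))) →
        (∀ t : ℝ, 0 < t → ∀ x : X, ∫ y, K t x y ∂μ = 0) →
        (∀ t : ℝ, 0 < t → ∀ x y : X,
          ‖K t x y‖ ≤ A * t ^ (-n) * (1 + dist x y / t) ^ (-(n + 1 + α))) →
        Measurable F →
        (∀ x y : X, ‖F x - F y‖ ≤ H * dist x y ^ α) →
        ∀ (x : X) (t : ℝ), 0 < t →
          ‖∫ y, F y * K t x y ∂μ‖ ≤ C * t ^ α :=
  stmt12_general n c₄ α A H hn hc₄ hα hA hH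
end

section
/- For t > 0 and x ∈ ℝ, one has the identity Σ_{n∈ℤ} (nt)² e^{-π t² n²} e^{2πinx} = (1/t) Σ_{n∈ℤ} (1/(2π) − ((n+x)/t)²) e^{-π(n+x)²/t²}, both series converging absolutely. -/
/-!
For `t > 0` the right-hand summand at `n` is `mexicanHat t (x + n)`, where
`mexicanHat t y = (1/(2π) - (y/t)²) e^{-πy²/t²}`. This is a combination of the Gaussian
`g(y) = e^{-πy²/t²}`, whose Fourier transform is `t e^{-πt²ξ²}`, and of `(-2πiy)² g(y)`, whose
Fourier transform is the second derivative of `𝓕 g`; adding up gives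
`𝓕 (mexicanHat t) ξ = t (ξt)² e^{-πt²ξ²}`, which is `t` times the left-hand summand without its
character. Both the Mexican hat and its Fourier transform are polynomials times Gaussians, so they
decay like `|y|⁻²`, and Poisson summation yields the absolute convergence and the identity.
-/

open Complex Real Asymptotics Filter FourierTransform MeasureTheory

theorem re_ofReal_pi_div_sq_pos {t : ℝ} (ht : t ≠ 0) : 0 < ((π : ℂ) / (t : ℂ) ^ 2).re := by
  rw [← ofReal_pow, ← ofReal_div, ofReal_re]
  positivity

theorem integrable_pow_smul_cexp_neg_mul_sq {b : ℂ} (hb : 0 < b.re) (n : ℕ) :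
    Integrable fun x : ℝ => x ^ n • cexp (-b * x ^ 2) := by
  have h := (integrable_rpow_mul_exp_neg_mul_sq hb (s := n)
    (by linarith [n.cast_nonneg (α := ℝ)])).norm
  refine (integrable_norm_iff (by fun_prop)).mp (h.congr (Eventually.of_forall fun x => ?_))
  dsimp only
  rw [norm_smul, norm_cexp_neg_mul_sq, norm_mul, Real.rpow_natCast, norm_of_nonneg (exp_pos _).le]

theorem fourier_cexp_neg_pi_div_sq_mul_sq {t : ℝ} (ht : 0 < t) :
    𝓕 (fun y : ℝ => cexp (-(π / t ^ 2) * y ^ 2)) =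
      fun ξ : ℝ => t * cexp (-(π * t ^ 2) * ξ ^ 2) := by
  have hre : 0 < ((t : ℂ)⁻¹ ^ 2).re := by
    rw [← ofReal_inv, ← ofReal_pow, ofReal_re]; positivity
  have hsqrt : ((t : ℂ)⁻¹ ^ 2) ^ (1 / 2 : ℂ) = (t : ℂ)⁻¹ := by
    rw [one_div, sq_cpow_two_inv (by rw [← ofReal_inv, ofReal_re]; positivity)]
  convert fourier_gaussian_pi hre using 1
  · congr 1; funext y; congr 1; field_simp
  · funext ξ; rw [hsqrt]; field_simp

theorem deriv_cexp_neg_mul_sq (b : ℂ) :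
    deriv (fun x : ℝ => cexp (-b * x ^ 2)) = fun x : ℝ => -(2 * b * x) * cexp (-b * x ^ 2) := by
  funext x
  have h := ((hasDerivAt_pow 2 (x : ℂ)).const_mul (-b)).cexp.comp_ofReal
  rw [h.deriv]; push_cast; ring

theorem iteratedDeriv_two_cexp_neg_mul_sq (b : ℂ) :
    iteratedDeriv 2 (fun x : ℝ => cexp (-b * x ^ 2)) =
      fun x : ℝ => ((2 * b * x) ^ 2 - 2 * b) * cexp (-b * x ^ 2) := by
  rw [iteratedDeriv_succ, iteratedDeriv_one, deriv_cexp_neg_mul_sq]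
  funext x
  have h1 := ((hasDerivAt_id (x : ℂ)).const_mul (-(2 * b))).comp_ofReal
  have h2 := ((hasDerivAt_pow 2 (x : ℂ)).const_mul (-b)).cexp.comp_ofReal
  refine ((h1.mul h2).congr_of_eventuallyEq (Eventually.of_forall fun y => ?_)).deriv.trans ?_
  · simp only [Pi.mul_apply, id]; ring
  · simp only [id]; push_cast; ring

theorem fourier_smul_add_smul {E : Type*} [NormedAddCommGroup E] [NormedSpace ℂ E]
    {f g : ℝ → E} (hf : Integrable f) (hg : Integrable g) (a c : ℂ) :
    𝓕 (a • f + c • g) = a • 𝓕 f + c • 𝓕 g := by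
  have hfa : 𝓕 (a • f) = a • 𝓕 f := VectorFourier.fourierIntegral_const_smul _ _ _ _ _
  have hgc : 𝓕 (c • g) = c • 𝓕 g := VectorFourier.fourierIntegral_const_smul _ _ _ _ _
  rw [← hfa, ← hgc]
  exact VectorFourier.fourierIntegral_add continuous_fourierChar continuous_inner
    (hf.smul a) (hg.smul c)

theorem fourier_sq_smul_cexp_neg_pi_div_sq_mul_sq {t : ℝ} (ht : 0 < t) :
    𝓕 (fun y : ℝ => (-2 * π * I * y) ^ 2 • cexp (-(π / t ^ 2) * y ^ 2)) =
      fun ξ : ℝ => t * (((2 * (π * t ^ 2) * ξ) ^ 2 - 2 * (π * t ^ 2)) *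
        cexp (-(π * t ^ 2) * ξ ^ 2)) := by
  rw [← Real.iteratedDeriv_fourier (N := 2) (fun n _ =>
    integrable_pow_smul_cexp_neg_mul_sq (re_ofReal_pi_div_sq_pos ht.ne') n) le_rfl,
    fourier_cexp_neg_pi_div_sq_mul_sq ht]
  funext ξ
  rw [iteratedDeriv_const_mul_field, iteratedDeriv_two_cexp_neg_mul_sq]

noncomputable def mexicanHat (t y : ℝ) : ℂ :=
  (1 / (2 * π) - (y / t) ^ 2) * cexp (-(π / t ^ 2) * y ^ 2)

theorem continuous_mexicanHat (t : ℝ) : Continuous (mexicanHat t) := by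
  unfold mexicanHat; fun_prop

theorem fourier_mexicanHat {t : ℝ} (ht : 0 < t) :
    𝓕 (mexicanHat t) = fun ξ : ℝ => t * ((ξ * t) ^ 2 * cexp (-π * t ^ 2 * ξ ^ 2)) := by
  have hre := re_ofReal_pi_div_sq_pos ht.ne'
  have hdecomp : mexicanHat t =
      (1 / (2 * π) : ℂ) • (fun y : ℝ => cexp (-(π / t ^ 2) * y ^ 2)) +
      (1 / (2 * π * t) : ℂ) ^ 2 •
        (fun y : ℝ => (-2 * π * I * y) ^ 2 • cexp (-(π / t ^ 2) * y ^ 2)) := by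
    funext y
    simp only [mexicanHat, Pi.add_apply, Pi.smul_apply, smul_eq_mul, mul_pow, I_sq]
    field_simp
    ring_nf
  have hg := integrable_pow_smul_cexp_neg_mul_sq hre 0
  simp only [pow_zero, one_smul] at hg
  have hh : Integrable fun y : ℝ => (-2 * π * I * y) ^ 2 • cexp (-(π / t ^ 2) * y ^ 2) :=
    ((integrable_pow_smul_cexp_neg_mul_sq hre 2).const_mul ((-2 * π * I) ^ 2)).congr
      (Eventually.of_forall fun y => by simp only [smul_eq_mul, real_smul]; push_cast; ring)
  rw [hdecomp, fourier_smul_add_smul hg hh,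
    fourier_cexp_neg_pi_div_sq_mul_sq ht, fourier_sq_smul_cexp_neg_pi_div_sq_mul_sq ht]
  funext ξ
  simp only [Pi.add_apply, Pi.smul_apply, smul_eq_mul]
  field_simp
  ring

theorem isLittleO_pow_mul_cexp_neg_mul_sq {b : ℂ} (hb : 0 < b.re) (n : ℕ) (s : ℝ) :
    (fun x : ℝ => (x : ℂ) ^ n * cexp (-b * x ^ 2)) =o[cocompact ℝ] (|·| ^ s) := by
  have hpow : (fun x : ℝ => (x : ℂ) ^ n) =O[cocompact ℝ] (|·| ^ (n : ℝ)) :=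
    isBigO_of_le _ fun x => by simp [Real.rpow_natCast]
  refine (hpow.mul_isLittleO (isLittleO_exp_neg_mul_sq_cocompact hb (s - n))).congr' .rfl ?_
  filter_upwards [(isCompact_singleton (x := (0 : ℝ))).compl_mem_cocompact] with x hx
  rw [← Real.rpow_add (abs_pos.mpr hx), add_sub_cancel]

theorem isBigO_mexicanHat {t : ℝ} (ht : t ≠ 0) :
    mexicanHat t =O[cocompact ℝ] (|·| ^ (-2 : ℝ)) := by
  have hre := re_ofReal_pi_div_sq_pos ht
  have h : mexicanHat t = fun y : ℝ =>
      1 / (2 * (π : ℂ)) * ((y : ℂ) ^ 0 * cexp (-(π / t ^ 2) * y ^ 2)) -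
        1 / (t : ℂ) ^ 2 * ((y : ℂ) ^ 2 * cexp (-(π / t ^ 2) * y ^ 2)) := by
    funext y; simp only [mexicanHat]; ring
  rw [h]
  exact ((isLittleO_pow_mul_cexp_neg_mul_sq hre 0 _).isBigO.const_mul_left _).sub
    ((isLittleO_pow_mul_cexp_neg_mul_sq hre 2 _).isBigO.const_mul_left _)

theorem isBigO_fourier_mexicanHat {t : ℝ} (ht : 0 < t) :
    𝓕 (mexicanHat t) =O[cocompact ℝ] (|·| ^ (-2 : ℝ)) := by
  have hre : 0 < ((π : ℂ) * (t : ℂ) ^ 2).re := by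
    rw [← ofReal_pow, ← ofReal_mul, ofReal_re]; positivity
  have h : 𝓕 (mexicanHat t) = fun ξ : ℝ =>
      (t : ℂ) ^ 3 * ((ξ : ℂ) ^ 2 * cexp (-(π * t ^ 2) * ξ ^ 2)) := by
    rw [fourier_mexicanHat ht]; funext ξ; ring_nf
  rw [h]
  exact (isLittleO_pow_mul_cexp_neg_mul_sq hre 2 _).isBigO.const_mul_left _

theorem summable_mul_fourier_of_isBigO_rpow {g : ℝ → ℂ} {b : ℝ} (hb : 1 < b)
    (hg : g =O[cocompact ℝ] (|·| ^ (-b))) (x : ℝ) :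
    Summable fun n : ℤ => g n * fourier n (x : UnitAddCircle) := by
  refine Summable.of_norm ?_
  simp only [norm_mul, Circle.norm_coe, fourier_apply, mul_one]
  exact (summable_of_isBigO (Real.summable_abs_int_rpow hb)
    (hg.comp_tendsto Int.tendsto_coe_cofinite)).norm

theorem summable_comp_add_int_of_isBigO_rpow {f : ℝ → ℂ} (hc : Continuous f) {b : ℝ}
    (hb : 1 < b) (hf : f =O[cocompact ℝ] (|·| ^ (-b))) (x : ℝ) :
    Summable fun n : ℤ => f (x + n) := by
  -- `‖f (x + n)‖` is at most the sup norm on `{x}` of the translate `f (· + n)`.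
  refine Summable.of_norm_bounded (summable_of_isBigO (Real.summable_abs_int_rpow hb)
    ((isBigO_norm_restrict_cocompact ⟨f, hc⟩ (zero_lt_one.trans hb) hf
      ⟨{x}, isCompact_singleton⟩).comp_tendsto Int.tendsto_coe_cofinite)) fun n => ?_
  exact (((ContinuousMap.mk f hc).comp (ContinuousMap.addRight (n : ℝ))).restrict
    ({x} : Set ℝ)).norm_coe_le_norm ⟨x, rfl⟩

/-- Poisson summation identity for `V_t`: for `t > 0` and `x ∈ ℝ`,
`Σ_{n∈ℤ} (nt)² e^{-π t² n²} e^{2πinx}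
  = (1/t) Σ_{n∈ℤ} (1/(2π) − ((n+x)/t)²) e^{-π(n+x)²/t²}`,
both series converging absolutely. -/
theorem stmt15 (t x : ℝ) (ht : 0 < t) :
    (Summable fun n : ℤ => ((n : ℂ) * (t : ℂ)) ^ 2 *
      Complex.exp (-(Real.pi : ℂ) * (t : ℂ) ^ 2 * (n : ℂ) ^ 2) *
      Complex.exp (2 * (Real.pi : ℂ) * Complex.I * (n : ℂ) * (x : ℂ))) ∧
    (Summable fun n : ℤ =>
      (1 / (2 * (Real.pi : ℂ)) - (((n : ℂ) + (x : ℂ)) / (t : ℂ)) ^ 2) *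
      Complex.exp (-(Real.pi : ℂ) * ((n : ℂ) + (x : ℂ)) ^ 2 / (t : ℂ) ^ 2)) ∧
    (∑' n : ℤ, ((n : ℂ) * (t : ℂ)) ^ 2 *
        Complex.exp (-(Real.pi : ℂ) * (t : ℂ) ^ 2 * (n : ℂ) ^ 2) *
        Complex.exp (2 * (Real.pi : ℂ) * Complex.I * (n : ℂ) * (x : ℂ)))
      = (1 / (t : ℂ)) *
        ∑' n : ℤ, (1 / (2 * (Real.pi : ℂ)) - (((n : ℂ) + (x : ℂ)) / (t : ℂ)) ^ 2) *
          Complex.exp (-(Real.pi : ℂ) * ((n : ℂ) + (x : ℂ)) ^ 2 / (t : ℂ) ^ 2) := by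
  have hlhs : ∀ n : ℤ,
      ((n : ℂ) * t) ^ 2 * cexp (-π * t ^ 2 * n ^ 2) * cexp (2 * π * I * n * x) =
        1 / t * (𝓕 (mexicanHat t) n * fourier n (x : UnitAddCircle)) := by
    intro n
    rw [fourier_mexicanHat ht, fourier_coe_apply]
    push_cast
    field_simp
  have hrhs : ∀ n : ℤ,
      (1 / (2 * (π : ℂ)) - ((n + x) / t) ^ 2) * cexp (-π * (n + x) ^ 2 / t ^ 2) =
        mexicanHat t (x + n) := by
    intro n
    simp only [mexicanHat]
    push_cast
    ring_nf
  have hdecay := isBigO_mexicanHat ht.ne'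
  have hFdecay := isBigO_fourier_mexicanHat ht
  refine ⟨((summable_mul_fourier_of_isBigO_rpow one_lt_two hFdecay x).mul_left _).congr
      fun n => (hlhs n).symm,
    (summable_comp_add_int_of_isBigO_rpow (continuous_mexicanHat t) one_lt_two hdecay x).congr
      fun n => (hrhs n).symm, ?_⟩
  rw [tsum_congr hlhs, tsum_congr hrhs, tsum_mul_left, Real.tsum_eq_tsum_fourier_of_rpow_decay
    (continuous_mexicanHat t) one_lt_two hdecay hFdecay]
end

section
/- Let L ≥ 0 be an integer and a₀, …, a_L ∈ ℂ. Then there exists an even Schwartz function u ∈ 𝓢(ℝ) such that u^{(2l)}(0) = a_l for every 0 ≤ l ≤ L, and such that the Fourier transform û has support contained in the open interval (−1, 1). -/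
/-!
Take `u` to be the Fourier transform of an even smooth function `f` supported in `[-1/2, 1/2]`:
then `u` is even, `𝓕 u = f`, and `u^{(2l)}(0) = (-2πi)^{2l} ∫ x^{2l} f(x) dx`, so it suffices to
prescribe the first `L + 1` even moments of `f`. For a rescaling `ψ(d x)` of an even nonnegative
bump `ψ`, the `2l`-th moment is `d^{-(2l+1)} m_l` with `m_l > 0`, so finding a combination
`f = ∑ⱼ bⱼ ψ(dⱼ x)` with prescribed moments is a transposed Vandermonde system in the distinct
nodes `dⱼ⁻²`.
-/

open MeasureTheory Complex
open scoped FourierTransform Real ContDiff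

section Fourier

variable {V E : Type*} [NormedAddCommGroup V] [InnerProductSpace ℝ V] [MeasurableSpace V]
  [BorelSpace V] [FiniteDimensional ℝ V] [NormedAddCommGroup E] [NormedSpace ℂ E]

lemma Real.fourierInv_eq_fourier_of_even {f : V → E} (hf : ∀ x, f (-x) = f x) :
    𝓕⁻ f = 𝓕 f := by
  rw [Real.fourierInv_eq_fourier_comp_neg]
  simp_rw [hf]

lemma Real.fourier_neg_of_even {f : V → E} (hf : ∀ x, f (-x) = f x) (w : V) :
    𝓕 f (-w) = 𝓕 f w := by
  rw [← Real.fourierInv_eq_fourier_neg, Real.fourierInv_eq_fourier_of_even hf]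

end Fourier

lemma Real.iteratedDeriv_fourier_zero {f : ℝ → ℂ} (hf : Continuous f)
    (hcs : HasCompactSupport f) (n : ℕ) :
    iteratedDeriv n (𝓕 f) 0 = (-2 * π * I) ^ n * ∫ x : ℝ, (x : ℂ) ^ n * f x := by
  have hint (k : ℕ) (_ : (k : ℕ∞) ≤ ⊤) : Integrable fun x : ℝ => x ^ k • f x :=
    ((continuous_pow k).smul hf).integrable_of_hasCompactSupport hcs.smul_left
  rw [Real.iteratedDeriv_fourier hint le_top, Real.fourier_real_eq, ← integral_const_mul]
  congr 1 with x
  simp only [mul_zero, neg_zero, AddChar.map_zero_eq_one, one_smul, smul_eq_mul]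
  ring

lemma exists_schwartzMap_coe_eq_fourier {f : ℝ → ℂ} (hcs : HasCompactSupport f)
    (hf : ContDiff ℝ ∞ f) (heven : ∀ x, f (-x) = f x) :
    ∃ u : SchwartzMap ℝ ℂ, ⇑u = 𝓕 f ∧ 𝓕 ⇑u = f := by
  refine ⟨𝓕⁻ (hcs.toSchwartzMap hf), ?_, ?_⟩
  · rw [SchwartzMap.fourierInv_coe]
    exact Real.fourierInv_eq_fourier_of_even heven
  · rw [← SchwartzMap.fourier_coe, FourierTransform.fourier_fourierInv_eq]
    rfl

lemma integral_pow_mul_comp_mul_left (g : ℝ → ℂ) (n : ℕ) {d : ℝ} (hd : 0 < d) :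
    ∫ x : ℝ, (x : ℂ) ^ n * g (d * x) = (d : ℂ)⁻¹ ^ (n + 1) * ∫ x : ℝ, (x : ℂ) ^ n * g x := by
  have hd' : (d : ℂ) ≠ 0 := ofReal_ne_zero.2 hd.ne'
  have (x : ℝ) :
      (x : ℂ) ^ n * g (d * x) = (d : ℂ)⁻¹ ^ n * (((d * x : ℝ) : ℂ) ^ n * g (d * x)) := by
    rw [ofReal_mul, mul_pow, ← mul_assoc, ← mul_assoc, ← mul_pow, inv_mul_cancel₀ hd', one_pow,
      one_mul]
  simp_rw [this, integral_const_mul,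
    Measure.integral_comp_mul_left (fun y : ℝ => (y : ℂ) ^ n * g y), abs_of_pos (inv_pos.2 hd),
    real_smul, ofReal_inv, ← mul_assoc, ← pow_succ]

theorem Matrix.exists_sum_mul_pow_eq {K : Type*} [Field K] {n : ℕ} {v : Fin n → K}
    (hv : Function.Injective v) (c : Fin n → K) :
    ∃ b : Fin n → K, ∀ i : Fin n, ∑ j, b j * v j ^ (i : ℕ) = c i := by
  have hV : IsUnit (vandermonde v).transpose := by
    rw [isUnit_iff_isUnit_det, det_transpose, isUnit_iff_ne_zero]
    exact det_vandermonde_ne_zero_iff.2 hv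
  obtain ⟨b, hb⟩ := mulVec_surjective_iff_isUnit.2 hV c
  refine ⟨b, fun i => ?_⟩
  simp [← hb, mulVec, dotProduct, vandermonde_apply, mul_comm]

noncomputable def evenBump (x : ℝ) : ℝ := expNegInvGlue (1 - x ^ 2)

lemma contDiff_evenBump : ContDiff ℝ ∞ evenBump :=
  expNegInvGlue.contDiff.comp (contDiff_const.sub (contDiff_id.pow 2))

@[fun_prop]
lemma continuous_evenBump : Continuous evenBump := contDiff_evenBump.continuous

lemma evenBump_neg (x : ℝ) : evenBump (-x) = evenBump x := by simp [evenBump]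

lemma evenBump_nonneg (x : ℝ) : 0 ≤ evenBump x := expNegInvGlue.nonneg _

lemma evenBump_pos {x : ℝ} (hx : |x| < 1) : 0 < evenBump x :=
  expNegInvGlue.pos_of_pos (by nlinarith [sq_abs x, abs_nonneg x])

lemma evenBump_eq_zero {x : ℝ} (hx : 1 ≤ |x|) : evenBump x = 0 :=
  expNegInvGlue.zero_of_nonpos (by nlinarith [sq_abs x])

lemma hasCompactSupport_evenBump : HasCompactSupport evenBump :=
  HasCompactSupport.intro (isCompact_closedBall 0 1) fun x hx => evenBump_eq_zero (by
    rw [Metric.mem_closedBall, Real.dist_eq, sub_zero, not_le] at hx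
    exact hx.le)

lemma integral_pow_mul_evenBump_pos (l : ℕ) : 0 < ∫ x : ℝ, x ^ (2 * l) * evenBump x := by
  rw [integral_pos_iff_support_of_nonneg
    (fun x => mul_nonneg ((even_two_mul l).pow_nonneg x) (evenBump_nonneg x))
    (((continuous_pow _).mul continuous_evenBump).integrable_of_hasCompactSupport
      hasCompactSupport_evenBump.mul_left)]
  have hsupp : Set.Ioo (0 : ℝ) 1 ⊆ Function.support fun x => x ^ (2 * l) * evenBump x :=
    fun x hx => (mul_pos (pow_pos hx.1 _) (evenBump_pos (by rw [abs_of_pos hx.1]; exact hx.2))).ne'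
  exact (by simp : (0 : ENNReal) < volume (Set.Ioo (0 : ℝ) 1)).trans_le (measure_mono hsupp)

lemma integral_pow_mul_evenBump_ne_zero (l : ℕ) :
    ∫ x : ℝ, (x : ℂ) ^ (2 * l) * evenBump x ≠ 0 := by
  have (x : ℝ) : (x : ℂ) ^ (2 * l) * evenBump x = ((x ^ (2 * l) * evenBump x : ℝ) : ℂ) := by
    rw [ofReal_mul, ofReal_pow]
  simp_rw [this, integral_complex_ofReal, ofReal_ne_zero]
  exact (integral_pow_mul_evenBump_pos l).ne'

section BumpCombination

variable {ι : Type*} [Fintype ι] (b : ι → ℂ) (d : ι → ℝ)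

noncomputable def bumpCombination (x : ℝ) : ℂ := ∑ j, b j * evenBump (d j * x)

lemma contDiff_bumpCombination : ContDiff ℝ ∞ (bumpCombination b d) :=
  ContDiff.sum fun _ _ => contDiff_const.mul <| ofRealCLM.contDiff.comp <|
    contDiff_evenBump.comp (contDiff_const.mul contDiff_id)

lemma bumpCombination_neg (x : ℝ) : bumpCombination b d (-x) = bumpCombination b d x := by
  simp only [bumpCombination, mul_neg, evenBump_neg]

lemma tsupport_bumpCombination_subset {ε : ℝ} (hε : 0 < ε) (hd : ∀ j, ε⁻¹ ≤ d j) :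
    tsupport (bumpCombination b d) ⊆ Set.Icc (-ε) ε := by
  refine closure_minimal (fun x hx => ?_) isClosed_Icc
  by_contra hxε
  refine hx (Finset.sum_eq_zero fun j _ => ?_)
  have hx' : ε < |x| := by
    rw [Set.mem_Icc, not_and_or, not_le, not_le] at hxε
    rcases hxε with h | h
    · rw [abs_of_neg (by linarith)]; linarith
    · rw [abs_of_pos (by linarith)]; linarith
  have : 1 ≤ |d j * x| := by
    rw [abs_mul, abs_of_pos ((inv_pos.2 hε).trans_le (hd j))]
    calc (1 : ℝ) = ε⁻¹ * ε := (inv_mul_cancel₀ hε.ne').symm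
      _ ≤ d j * |x| := mul_le_mul (hd j) hx'.le hε.le ((inv_pos.2 hε).le.trans (hd j))
  rw [evenBump_eq_zero this, ofReal_zero, mul_zero]

lemma integral_pow_mul_bumpCombination (n : ℕ) (hd : ∀ j, 0 < d j) :
    ∫ x : ℝ, (x : ℂ) ^ n * bumpCombination b d x =
      ∑ j, b j * (d j : ℂ)⁻¹ ^ (n + 1) * ∫ x : ℝ, (x : ℂ) ^ n * evenBump x := by
  have hint (j : ι) : Integrable fun x : ℝ => (x : ℂ) ^ n * (b j * evenBump (d j * x)) :=
    Continuous.integrable_of_hasCompactSupport (by fun_prop)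
      ((hasCompactSupport_evenBump.comp_smul (hd j).ne').comp_left ofReal_zero).mul_left.mul_left
  simp_rw [bumpCombination, Finset.mul_sum]
  rw [integral_finsetSum _ fun j _ => hint j]
  refine Finset.sum_congr rfl fun j _ => ?_
  simp_rw [mul_left_comm _ (b j), integral_const_mul]
  rw [integral_pow_mul_comp_mul_left (fun y => (evenBump y : ℂ)) n (hd j), mul_assoc]

end BumpCombination

theorem exists_even_contDiff_moments_eq (L : ℕ) (c : ℕ → ℂ) {ε : ℝ} (hε : 0 < ε) :
    ∃ f : ℝ → ℂ, ContDiff ℝ ∞ f ∧ (∀ x, f (-x) = f x) ∧ tsupport f ⊆ Set.Icc (-ε) ε ∧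
      ∀ l ≤ L, ∫ x : ℝ, (x : ℂ) ^ (2 * l) * f x = c l := by
  set d : Fin (L + 1) → ℝ := fun j => (j + 1) / ε
  have hd_pos (j : Fin (L + 1)) : 0 < d j := by positivity
  have hd_ge (j : Fin (L + 1)) : ε⁻¹ ≤ d j := by
    rw [inv_eq_one_div]
    exact div_le_div_of_nonneg_right (le_add_of_nonneg_left (Nat.cast_nonneg _)) hε.le
  have hd_ne (j : Fin (L + 1)) : (d j : ℂ) ≠ 0 := ofReal_ne_zero.2 (hd_pos j).ne'
  have hnodes : Function.Injective fun j => ((d j : ℂ)⁻¹) ^ 2 := by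
    intro i j hij
    simp only [← ofReal_inv, ← ofReal_pow, ofReal_inj, inv_pow, inv_inj] at hij
    rw [sq_eq_sq₀ (hd_pos i).le (hd_pos j).le, div_left_inj' hε.ne', add_left_inj] at hij
    exact Fin.ext (by exact_mod_cast hij)
  set m : ℕ → ℂ := fun l => ∫ x : ℝ, (x : ℂ) ^ (2 * l) * evenBump x
  obtain ⟨β, hβ⟩ := Matrix.exists_sum_mul_pow_eq hnodes fun l => c l / m l
  -- the factor `d j` cancels the odd power in `d j ^ (-(2 * l + 1))`
  refine ⟨bumpCombination (fun j => β j * d j) d, contDiff_bumpCombination _ _,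
    bumpCombination_neg _ _, tsupport_bumpCombination_subset _ _ hε hd_ge, fun l hl => ?_⟩
  calc ∫ x : ℝ, (x : ℂ) ^ (2 * l) * bumpCombination (fun j => β j * d j) d x
      = (∑ j, β j * ((d j : ℂ)⁻¹ ^ 2) ^ l) * m l := by
        rw [integral_pow_mul_bumpCombination _ _ _ hd_pos, Finset.sum_mul]
        refine Finset.sum_congr rfl fun j _ => ?_
        rw [pow_succ', ← mul_assoc, mul_assoc (β j), mul_inv_cancel₀ (hd_ne j), mul_one, ← pow_mul]
    _ = c l := by
        rw [hβ ⟨l, by omega⟩, div_mul_cancel₀ _ (integral_pow_mul_evenBump_ne_zero l)]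

/-- Technical lemma: given `a₀, …, a_L ∈ ℂ`, there exists an even Schwartz function
`u ∈ 𝓢(ℝ)` with `u^{(2l)}(0) = a_l` for `0 ≤ l ≤ L` and with the support of its
Fourier transform contained in `(-1, 1)`. -/
theorem stmt17 (L : ℕ) (a : ℕ → ℂ) :
    ∃ u : SchwartzMap ℝ ℂ,
      (∀ x : ℝ, u (-x) = u x) ∧
      (∀ l : ℕ, l ≤ L → iteratedDeriv (2 * l) (⇑u) 0 = a l) ∧
      tsupport (FourierTransform.fourier (⇑u : ℝ → ℂ)) ⊆ Set.Ioo (-1) 1 := by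
  obtain ⟨f, hf, heven, hsupp, hmoments⟩ :=
    exists_even_contDiff_moments_eq L (fun l => a l / (-2 * π * I) ^ (2 * l)) one_half_pos
  have hcs : HasCompactSupport f := isCompact_Icc.of_isClosed_subset (isClosed_tsupport f) hsupp
  obtain ⟨u, hu, hFu⟩ := exists_schwartzMap_coe_eq_fourier hcs hf heven
  refine ⟨u, fun x => ?_, fun l hl => ?_, ?_⟩
  · rw [hu, Real.fourier_neg_of_even heven]
  · rw [hu, Real.iteratedDeriv_fourier_zero hf.continuous hcs, hmoments l hl,
      mul_div_cancel₀ _ (by simp [Real.pi_ne_zero, I_ne_zero])]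
  · rw [hFu]
    exact hsupp.trans (Set.Icc_subset_Ioo (by norm_num) (by norm_num))
end
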